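/- arXiv:math/0104036 — 4 statements merged into one kernel-verified Lean document; each statement's English description precedes it below -/
import Mathlib

section
/- Let m ≥ 1. The group Γ_P generated by the transvections τ^P_j, 2 ≤ j ≤ m, has exactly m+1 orbits in 𝔽₂^m, and exactly two of these orbits are fixed points of the Γ_P-action. -/
/-!
The map `diffP : ζ ↦ (ζ_k + ζ_{k+1})_k` (with `ζ_{m+1} = 0`) is a bijection of `𝔽₂^m` which
conjugates `τ^P_j` into the transposition of the coordinates `j - 1` and `j`. Adjacent
transpositions generate `S_m`, so `Γ_P` is the conjugate under `diffP` of the group of coordinate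
permutations. The orbits of the latter are the `m + 1` Hamming spheres, and its fixed points are
the two constant vectors.
-/

open scoped Classical

noncomputable section

/-- The `i`-th coordinate (1-indexed) of `ζ ∈ 𝔽₂^m`, interpreted as `0` for `i` out of range. -/
def padP {m : ℕ} (ζ : Fin m → ZMod 2) (i : ℕ) : ZMod 2 :=
  if h : 1 ≤ i ∧ i ≤ m then ζ ⟨i - 1, by omega⟩ else 0

/-- The transvection `τ^P_j(ζ) = ζ + (ζ_{j-1} + ζ_{j+1}) e_j`. -/
def tauP (m j : ℕ) (ζ : Fin m → ZMod 2) : Fin m → ZMod 2 :=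
  fun k => if (k : ℕ) + 1 = j then ζ k + (padP ζ (j - 1) + padP ζ (j + 1)) else ζ k

/-- The group `Γ_P`, generated by the transvections `τ^P_j`, `2 ≤ j ≤ m`. -/
def GammaP (m : ℕ) : Subgroup (Equiv.Perm (Fin m → ZMod 2)) :=
  Subgroup.closure {g | ∃ j, 2 ≤ j ∧ j ≤ m ∧ ⇑g = tauP m j}

open Equiv

variable {m : ℕ}

lemma padP_val_add_one (ζ : Fin m → ZMod 2) (k : Fin m) : padP ζ (k + 1) = ζ k := by
  simp [padP]

lemma padP_zero (ζ : Fin m → ZMod 2) : padP ζ 0 = 0 := by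
  simp [padP]

lemma padP_of_lt {i : ℕ} (ζ : Fin m → ZMod 2) (hi : m < i) : padP ζ i = 0 := by
  simp [padP]; omega

lemma padP_tauP_of_ne {i j : ℕ} (h : i ≠ j) (ζ : Fin m → ZMod 2) :
    padP (tauP m j ζ) i = padP ζ i := by
  unfold padP tauP
  split_ifs with hi hj
  · simp only at hj; omega
  all_goals rfl

lemma padP_tauP_self {j : ℕ} (hj : 1 ≤ j) (hjm : j ≤ m) (ζ : Fin m → ZMod 2) :
    padP (tauP m j ζ) j = padP ζ j + (padP ζ (j - 1) + padP ζ (j + 1)) := by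
  rw [padP, padP, dif_pos ⟨hj, hjm⟩, dif_pos ⟨hj, hjm⟩, tauP, if_pos (by simp; omega)]

def diffP (ζ : Fin m → ZMod 2) : Fin m → ZMod 2 := fun k => padP ζ (k + 1) + padP ζ (k + 2)

lemma diffP_injective : Function.Injective (diffP (m := m)) := by
  intro ζ η h
  -- downward induction on `i`, starting from the zero padding beyond `m`
  suffices ∀ t i, m < i + t → padP ζ i = padP η i from
    funext fun k => by simpa [padP_val_add_one] using this m (k + 1) (by omega)
  intro t
  induction t with
  | zero => intro i hi; rw [padP_of_lt ζ (by omega), padP_of_lt η (by omega)]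
  | succ t ih =>
    intro i hi
    obtain rfl | ⟨k, rfl⟩ : i = 0 ∨ ∃ k : ℕ, i = k + 1 := by cases i <;> simp
    · rw [padP_zero, padP_zero]
    obtain hk | hk := lt_or_ge k m
    · have hdiff := congrFun h ⟨k, hk⟩
      simp only [diffP] at hdiff
      rw [ih (k + 2) (by omega)] at hdiff
      exact add_right_cancel hdiff
    · rw [padP_of_lt ζ (by omega), padP_of_lt η (by omega)]

-- `Fin m` is 0-based, so the coordinates `a` and `b = a + 1` are the paper's `j - 1` and `j`.
lemma diffP_tauP {a b : Fin m} (hab : (a : ℕ) + 1 = b) (ζ : Fin m → ZMod 2) :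
    diffP (tauP m (b + 1) ζ) = diffP ζ ∘ swap a b := by
  have hb := b.isLt
  funext k
  simp only [diffP, Function.comp_apply, swap_apply_def]
  split_ifs with h1 h2
  · subst k
    rw [hab, padP_tauP_of_ne (by omega), show (a : ℕ) + 2 = b + 1 by omega,
      padP_tauP_self (by omega) (by omega), Nat.add_sub_cancel]
    grind
  · subst k
    rw [padP_tauP_self (by omega) (by omega), padP_tauP_of_ne (by omega),
      show (a : ℕ) + 2 = b + 1 by omega, hab, Nat.add_sub_cancel]
    grind
  · rw [padP_tauP_of_ne, padP_tauP_of_ne]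
    · exact fun h => h1 (Fin.ext (by omega))
    · exact fun h => h2 (Fin.ext (by omega))

lemma diffP_bijective : Function.Bijective (diffP (m := m)) :=
  Finite.injective_iff_bijective.1 diffP_injective

variable (m) in
def coordPerm : Perm (Fin m) →* Perm (Fin m → ZMod 2) where
  toFun π := π.arrowCongr (Equiv.refl _)
  map_one' := rfl
  map_mul' _ _ := rfl

variable (m) in
def conjDiffP : Perm (Fin m) →* Perm (Fin m → ZMod 2) :=
  (Equiv.ofBijective _ diffP_bijective).symm.permCongrHom.toMonoidHom.comp (coordPerm m)

lemma diffP_conjDiffP_apply (π : Perm (Fin m)) (ζ : Fin m → ZMod 2) :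
    diffP (conjDiffP m π ζ) = diffP ζ ∘ π.symm :=
  Equiv.ofBijective_apply_symm_apply _ diffP_bijective _

lemma conjDiffP_apply_eq_iff (π : Perm (Fin m)) (ζ η : Fin m → ZMod 2) :
    conjDiffP m π ζ = η ↔ diffP ζ ∘ π.symm = diffP η := by
  rw [← diffP_injective.eq_iff, diffP_conjDiffP_apply]

lemma conjDiffP_swap {a b : Fin m} (hab : (a : ℕ) + 1 = b) :
    ⇑(conjDiffP m (swap a b)) = tauP m (b + 1) := by
  funext ζ
  apply diffP_injective
  rw [diffP_conjDiffP_apply, diffP_tauP hab, symm_swap]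

lemma exists_adjacent_of_two_le {j : ℕ} (hj : 2 ≤ j) (hjm : j ≤ m) :
    ∃ a b : Fin m, (a : ℕ) + 1 = b ∧ j = b + 1 :=
  ⟨⟨j - 2, by omega⟩, ⟨j - 1, by omega⟩, by simp; omega, by simp; omega⟩

lemma closure_swap_adjacent :
    Subgroup.closure {σ : Perm (Fin m) | ∃ a b : Fin m, (a : ℕ) + 1 = b ∧ σ = swap a b} =
      ⊤ := by
  cases m with
  | zero => exact Subsingleton.elim _ _
  | succ n =>
    refine Subgroup.closure_eq_top_of_mclosure_eq_top
      (eq_top_mono ?_ (Perm.mclosure_swap_castSucc_succ n))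
    refine Submonoid.closure_mono ?_
    rintro _ ⟨i, rfl⟩
    exact ⟨i.castSucc, i.succ, by simp, rfl⟩

lemma GammaP_eq_range : GammaP m = (conjDiffP m).range := by
  rw [MonoidHom.range_eq_map, ← closure_swap_adjacent, MonoidHom.map_closure, GammaP]
  congr 1
  ext g
  constructor
  · rintro ⟨j, hj2, hjm, hg⟩
    obtain ⟨a, b, hab, rfl⟩ := exists_adjacent_of_two_le hj2 hjm
    exact ⟨swap a b, ⟨a, b, hab, rfl⟩,
      DFunLike.coe_injective ((conjDiffP_swap hab).trans hg.symm)⟩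
  · rintro ⟨_, ⟨a, b, hab, rfl⟩, rfl⟩
    exact ⟨b + 1, by omega, b.isLt, conjDiffP_swap hab⟩

lemma hammingNorm_comp_perm {ι : Type*} [Fintype ι] (f : ι → ZMod 2) (π : Perm ι) :
    hammingNorm (f ∘ π) = hammingNorm f := by
  simp only [hammingNorm]
  exact Finset.card_equiv π (by simp)

lemma exists_perm_comp_eq_iff_hammingNorm_eq {ι : Type*} [Fintype ι] [DecidableEq ι]
    {f g : ι → ZMod 2} : (∃ π : Perm ι, f ∘ π = g) ↔ hammingNorm f = hammingNorm g := by
  refine ⟨fun ⟨π, hπ⟩ => hπ ▸ (hammingNorm_comp_perm f π).symm, fun h => ?_⟩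
  have hcard : Fintype.card {i // g i ≠ 0} = Fintype.card {i // f i ≠ 0} := by
    simpa only [hammingNorm, Fintype.card_subtype] using h.symm
  let e := Fintype.equivOfCardEq hcard
  refine ⟨e.extendSubtype, funext fun i => ?_⟩
  have eq_of_ne_zero_iff : ∀ a b : ZMod 2, (a ≠ 0 ↔ b ≠ 0) → a = b := by decide
  exact eq_of_ne_zero_iff _ _
    ⟨fun hf hg => e.extendSubtype_not_mem i (not_not.2 hg) hf, e.extendSubtype_mem i⟩

lemma range_hammingNorm (m : ℕ) :
    Set.range (hammingNorm : (Fin m → ZMod 2) → ℕ) = Set.Iic m := by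
  refine Set.Subset.antisymm ?_ fun k hk => ?_
  · rintro _ ⟨f, rfl⟩
    simpa using hammingNorm_le_card_fintype (x := f)
  · refine ⟨fun i => if (i : ℕ) < k then 1 else 0, ?_⟩
    simp only [hammingNorm, ne_eq, ite_eq_right_iff, one_ne_zero, imp_false, not_not]
    rw [Fin.card_filter_val_lt, min_eq_right hk]

lemma orbitRel_GammaP_iff (ζ η : Fin m → ZMod 2) :
    MulAction.orbitRel (GammaP m) _ ζ η ↔ hammingNorm (diffP ζ) = hammingNorm (diffP η) := by
  rw [MulAction.orbitRel_apply, MulAction.mem_orbit_iff, eq_comm,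
    ← exists_perm_comp_eq_iff_hammingNorm_eq]
  simp only [Subtype.exists, GammaP_eq_range, MonoidHom.mem_range, Subgroup.mk_smul,
    Perm.smul_def, exists_prop, exists_exists_eq_and]
  simp only [conjDiffP_apply_eq_iff]
  exact (symm_bijective.surjective.exists
    (p := fun π : Perm (Fin m) => diffP η ∘ π = diffP ζ)).symm

lemma card_orbitRel_quotient_GammaP :
    Nat.card (MulAction.orbitRel.Quotient (GammaP m) (Fin m → ZMod 2)) = m + 1 := by
  rw [Nat.card_congr ((Quotient.congrRight orbitRel_GammaP_iff).trans
    (Setoid.quotientKerEquivRange _)), Set.range_comp', diffP_bijective.2.range_eq,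
    Set.image_univ, range_hammingNorm, Nat.card_coe_set_eq, Set.ncard_Iic_nat]

lemma forall_tauP_eq_self_iff (ζ : Fin m → ZMod 2) :
    (∀ j, 2 ≤ j → j ≤ m → tauP m j ζ = ζ) ↔ ∀ π, conjDiffP m π ζ = ζ := by
  refine ⟨fun h π => ?_, fun h j hj2 hjm => ?_⟩
  · suffices (MulAction.stabilizer _ ζ).comap (conjDiffP m) = ⊤ from
      (this ▸ Subgroup.mem_top π : π ∈ _)
    rw [eq_top_iff, ← closure_swap_adjacent, Subgroup.closure_le]
    rintro _ ⟨a, b, hab, rfl⟩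
    exact (congrFun (conjDiffP_swap hab) ζ).trans (h _ (by omega) b.isLt)
  · obtain ⟨a, b, hab, rfl⟩ := exists_adjacent_of_two_le hj2 hjm
    exact (congrFun (conjDiffP_swap hab) ζ).symm.trans (h _)

lemma forall_comp_perm_eq_self_iff {ι α : Type*} [DecidableEq ι] [Nonempty ι] {f : ι → α} :
    (∀ π : Perm ι, f ∘ π = f) ↔ f ∈ Set.range (Function.const ι) := by
  refine ⟨fun h => ⟨f (Classical.arbitrary ι), funext fun i => ?_⟩, ?_⟩
  · simpa using congrFun (h (swap i (Classical.arbitrary ι))) i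
  · rintro ⟨c, rfl⟩ π
    rfl

lemma setOf_forall_tauP_eq_self [NeZero m] :
    {ζ : Fin m → ZMod 2 | ∀ j, 2 ≤ j → j ≤ m → tauP m j ζ = ζ} =
      diffP ⁻¹' Set.range (Function.const (Fin m)) := by
  ext ζ
  rw [Set.mem_ofPred_eq, forall_tauP_eq_self_iff, Set.mem_preimage,
    ← forall_comp_perm_eq_self_iff]
  simp only [conjDiffP_apply_eq_iff]
  exact (symm_bijective.surjective.forall
    (p := fun π : Perm (Fin m) => diffP ζ ∘ π = diffP ζ)).symm

/-- The group `Γ_P` has exactly `m + 1` orbits in `𝔽₂^m`, and exactly two of these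
orbits are fixed points of the `Γ_P`-action. -/
theorem number_of_GammaP_orbits (m : ℕ) (hm : 1 ≤ m) :
    Nat.card (MulAction.orbitRel.Quotient (GammaP m) (Fin m → ZMod 2)) = m + 1 ∧
    Nat.card {ζ : Fin m → ZMod 2 | ∀ j, 2 ≤ j → j ≤ m → tauP m j ζ = ζ} = 2 := by
  have : NeZero m := ⟨by omega⟩
  refine ⟨card_orbitRel_quotient_GammaP, ?_⟩
  rw [setOf_forall_tauP_eq_self, Nat.card_preimage_of_injective diffP_injective
    (by simp [diffP_bijective.2.range_eq]), Nat.card_range_of_injective Function.const_injective,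
    Nat.card_zmod]
end
end

section
/- Let m ≥ 1. A vector ζ ∈ 𝔽₂^m is a fixed point of the Γ_P-action if and only if either ζ = 0 or ζ_i = 1 exactly for those indices i with i ≡ m (mod 2); in particular, the Γ_P-action has exactly two fixed points. -/
open scoped Classical

noncomputable section

lemma zmod2_cases : ∀ a : ZMod 2, a = 0 ∨ a = 1 := by decide

lemma zmod2_add_eq_zero : ∀ a b : ZMod 2, a + b = 0 → a = b := by decide

lemma zmod2_self_add : ∀ a : ZMod 2, a + a = 0 := by decide

/-- Fixed-point condition rephrased. -/
lemma fixP_iff (m : ℕ) (ζ : Fin m → ZMod 2) :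
    (∀ j, 2 ≤ j → j ≤ m → tauP m j ζ = ζ) ↔
      (∀ j, 2 ≤ j → j ≤ m → padP ζ (j - 1) = padP ζ (j + 1)) := by
  constructor
  · intro h j h2 hj
    have hk : j - 1 < m := by omega
    have := congrFun (h j h2 hj) ⟨j - 1, hk⟩
    simp only [tauP] at this
    rw [if_pos (show (j-1)+1 = j by omega)] at this
    apply zmod2_add_eq_zero
    have := left_eq_add.mp this.symm
    exact this
  · intro h j h2 hj
    funext k
    simp only [tauP]
    split
    · rw [← h j h2 hj, zmod2_self_add, add_zero]
    · rfl

lemma keyP (m : ℕ) (ζ : Fin m → ZMod 2)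
    (hC : ∀ j, 2 ≤ j → j ≤ m → padP ζ (j - 1) = padP ζ (j + 1)) :
    ∀ d i, i + d = m → 1 ≤ i →
      padP ζ i = if d % 2 = 0 then padP ζ m else 0 := by
  intro d
  induction d using Nat.strong_induction_on with
  | _ d ih =>
    intro i hi h1
    match d, hi with
    | 0, hi =>
      simp [show i = m by omega]
    | 1, hi =>
      have h2 : 2 ≤ m := by omega
      have := hC m h2 le_rfl
      have hz : padP ζ (m + 1) = 0 := by
        unfold padP; rw [dif_neg (by omega)]
      rw [show i = m - 1 by omega, this, hz, if_neg (by omega)]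
    | (d + 2), hi =>
      have hj := hC (i + 1) (by omega) (by omega)
      have h1' : (i + 1) - 1 = i := by omega
      rw [h1'] at hj
      have := ih d (by omega) (i + 2) (by omega) (by omega)
      rw [hj, show i + 1 + 1 = i + 2 from rfl, this,
        show (d + 2) % 2 = d % 2 by omega]

/-- The nonzero fixed point. -/
def vP (m : ℕ) : Fin m → ZMod 2 :=
  fun p => if ((p : ℕ) + 1) % 2 = m % 2 then 1 else 0

/-- A vector `ζ ∈ 𝔽₂^m` is a fixed point of the `Γ_P`-action iff `ζ = 0` or `ζ_i = 1`
exactly for the (1-indexed) positions `i ≡ m (mod 2)`; in particular there are exactly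
two fixed points. -/
theorem GammaP_fixed_points (m : ℕ) (hm : 1 ≤ m) :
    (∀ ζ : Fin m → ZMod 2,
      (∀ j, 2 ≤ j → j ≤ m → tauP m j ζ = ζ) ↔
        (ζ = 0 ∨ ∀ p : Fin m, (ζ p = 1 ↔ ((p : ℕ) + 1) % 2 = m % 2))) ∧
    Nat.card {ζ : Fin m → ZMod 2 | ∀ j, 2 ≤ j → j ≤ m → tauP m j ζ = ζ} = 2 := by
  have main : ∀ ζ : Fin m → ZMod 2,
      (∀ j, 2 ≤ j → j ≤ m → tauP m j ζ = ζ) ↔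
        (ζ = 0 ∨ ∀ p : Fin m, (ζ p = 1 ↔ ((p : ℕ) + 1) % 2 = m % 2)) := by
    intro ζ
    rw [fixP_iff]
    constructor
    · intro hC
      set c := padP ζ m with hc
      have hval : ∀ p : Fin m,
          ζ p = if ((p : ℕ) + 1) % 2 = m % 2 then c else 0 := by
        intro p
        have h1 : 1 ≤ (p : ℕ) + 1 := by omega
        have h2 : (p : ℕ) + 1 ≤ m := p.2
        have hpad : padP ζ ((p : ℕ) + 1) = ζ p := by
          unfold padP; rw [dif_pos ⟨h1, h2⟩]
          exact congrArg ζ (Fin.ext (by simp))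
        have := keyP m ζ hC (m - ((p : ℕ) + 1)) ((p : ℕ) + 1) (by omega) h1
        rw [hpad] at this
        rw [this]
        have hiff : (m - ((p : ℕ) + 1)) % 2 = 0 ↔ ((p : ℕ) + 1) % 2 = m % 2 := by
          omega
        by_cases hcond : ((p : ℕ) + 1) % 2 = m % 2
        · rw [if_pos (hiff.mpr hcond), if_pos hcond]
        · rw [if_neg (fun h => hcond (hiff.mp h)), if_neg hcond]
      rcases zmod2_cases c with h0 | h1
      · left
        funext p
        rw [hval p, h0]
        simp
      · right
        intro p
        rw [hval p, h1]
        by_cases hcond : ((p : ℕ) + 1) % 2 = m % 2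
        · simp [hcond]
        · simp [hcond]
    · intro h j h2 hj
      rcases h with h0 | hpar
      · subst h0
        unfold padP
        split <;> split <;> rfl
      · have hval : ∀ i, padP ζ i =
            if 1 ≤ i ∧ i ≤ m ∧ i % 2 = m % 2 then 1 else 0 := by
          intro i
          unfold padP
          split
          next hr =>
            have hp := hpar ⟨i - 1, by omega⟩
            simp only at hp
            have hidx : (i - 1) + 1 = i := by omega
            rw [hidx] at hp
            by_cases hcond : i % 2 = m % 2
            · rw [hp.mpr hcond, if_pos ⟨hr.1, hr.2, hcond⟩]
            · rw [if_neg (by tauto)]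
              rcases zmod2_cases (ζ ⟨i - 1, by omega⟩) with h | h
              · exact h
              · exact absurd (hp.mp h) hcond
          next hr =>
            rw [if_neg (by tauto)]
        rw [hval, hval]
        have : (1 ≤ j - 1 ∧ j - 1 ≤ m ∧ (j - 1) % 2 = m % 2) ↔
            (1 ≤ j + 1 ∧ j + 1 ≤ m ∧ (j + 1) % 2 = m % 2) := by omega
        exact if_congr this rfl rfl
  refine ⟨main, ?_⟩
  have hset : {ζ : Fin m → ZMod 2 | ∀ j, 2 ≤ j → j ≤ m → tauP m j ζ = ζ}
      = {0, vP m} := by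
    ext ζ
    simp only [Set.mem_setOf_eq, Set.mem_insert_iff, Set.mem_singleton_iff]
    rw [main ζ]
    apply or_congr_right
    constructor
    · intro h
      funext p
      rw [vP]
      by_cases hcond : ((p : ℕ) + 1) % 2 = m % 2
      · rw [if_pos hcond, (h p).mpr hcond]
      · rw [if_neg hcond]
        rcases zmod2_cases (ζ p) with h0 | h1
        · exact h0
        · exact absurd ((h p).mp h1) hcond
    · intro h p
      subst h
      rw [vP]
      by_cases hcond : ((p : ℕ) + 1) % 2 = m % 2
      · simp [hcond]
      · simp [hcond]
  rw [hset, Nat.card_coe_set_eq]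
  apply Set.ncard_pair
  intro heq
  have := congrFun heq ⟨m - 1, by omega⟩
  rw [vP] at this
  simp only [Pi.zero_apply] at this
  rw [if_pos (show (m - 1 + 1) % 2 = m % 2 by omega)] at this
  exact zero_ne_one this

end
end

section
/- Let m > 2. Every nontrivial orbit of the Γ_S-action on 𝔽₂^{2m} contains either an element of the form (ζ_1, ζ_2, ζ_3, ζ_4, 0, …, 0) in which not all of ζ_1, ζ_2, ζ_3, ζ_4 are zero, or the element ζ̄ = e_3 + e_4 + e_5 = (0,0,1,1,1,0,…,0). -/
open scoped Classical

noncomputable section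

/-- The `i`-th coordinate (1-indexed) of `ζ ∈ 𝔽₂^{2m}`, interpreted as `0` out of range. -/
def padS {m : ℕ} (ζ : Fin (2 * m) → ZMod 2) (i : ℕ) : ZMod 2 :=
  if h : 1 ≤ i ∧ i ≤ 2 * m then ζ ⟨i - 1, by omega⟩ else 0

/-- The transvection `τ^S_j(ζ) = ζ + (ζ_{j-2} + ζ_{j-1} + ζ_{j+1} + ζ_{j+2}) e_j`. -/
def tauS (m j : ℕ) (ζ : Fin (2 * m) → ZMod 2) : Fin (2 * m) → ZMod 2 :=
  fun k => if (k : ℕ) + 1 = j then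
    ζ k + (padS ζ (j - 2) + padS ζ (j - 1) + padS ζ (j + 1) + padS ζ (j + 2))
  else ζ k

/-- The group `Γ_S`, generated by the transvections `τ^S_j`, `3 ≤ j ≤ 2m`. -/
def GammaS (m : ℕ) : Subgroup (Equiv.Perm (Fin (2 * m) → ZMod 2)) :=
  Subgroup.closure {g | ∃ j, 3 ≤ j ∧ j ≤ 2 * m ∧ ⇑g = tauS m j}

set_option synthInstance.maxHeartbeats 1000000
set_option maxHeartbeats 1000000

-- infrastructure
def coefS (m : ℕ) (ζ : Fin (2 * m) → ZMod 2) (j : ℕ) : ZMod 2 :=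
  padS ζ (j - 2) + padS ζ (j - 1) + padS ζ (j + 1) + padS ζ (j + 2)

lemma zmod2_cases_s4 (x : ZMod 2) : x = 0 ∨ x = 1 := by revert x; decide

lemma padS_out {m : ℕ} (ζ : Fin (2 * m) → ZMod 2) (i : ℕ) (h : ¬(1 ≤ i ∧ i ≤ 2 * m)) :
    padS ζ i = 0 := by simp [padS, h]

lemma padS_tauS {m : ℕ} (ζ : Fin (2 * m) → ZMod 2) {j : ℕ} (hj3 : 3 ≤ j) (hj : j ≤ 2 * m)
    (i : ℕ) : padS (tauS m j ζ) i = if i = j then padS ζ i + coefS m ζ j else padS ζ i := by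
  by_cases hi : 1 ≤ i ∧ i ≤ 2 * m
  · have h1 : padS (tauS m j ζ) i = tauS m j ζ ⟨i - 1, by omega⟩ := by
      simp [padS, hi]
    have h2 : padS ζ i = ζ ⟨i - 1, by omega⟩ := by simp [padS, hi]
    rw [h1, h2, tauS]
    simp only []
    by_cases hij : i = j
    · rw [if_pos (by omega), if_pos hij]; rfl
    · rw [if_neg (by omega), if_neg hij]
  · rw [padS_out _ _ hi, padS_out _ _ hi, if_neg (by omega)]

lemma padS_tauS_ne {m : ℕ} (ζ : Fin (2 * m) → ZMod 2) {j : ℕ} (hj3 : 3 ≤ j) (hj : j ≤ 2 * m)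
    {i : ℕ} (hij : i ≠ j) : padS (tauS m j ζ) i = padS ζ i := by
  rw [padS_tauS ζ hj3 hj, if_neg hij]

lemma padS_tauS_self {m : ℕ} (ζ : Fin (2 * m) → ZMod 2) {j : ℕ} (hj3 : 3 ≤ j) (hj : j ≤ 2 * m) :
    padS (tauS m j ζ) j = padS ζ j + coefS m ζ j := by
  rw [padS_tauS ζ hj3 hj, if_pos rfl]

section
variable {m : ℕ}

lemma tauS_eq_of_coef_zero {ζ : Fin (2 * m) → ZMod 2} {j : ℕ}
    (h : coefS m ζ j = 0) : tauS m j ζ = ζ := by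
  funext k
  rw [tauS]
  by_cases hk : (k : ℕ) + 1 = j
  · rw [if_pos hk]
    have : padS ζ (j-2) + padS ζ (j-1) + padS ζ (j+1) + padS ζ (j+2) = 0 := h
    rw [this, add_zero]
  · rw [if_neg hk]

lemma coefS_tauS {ζ : Fin (2 * m) → ZMod 2} {j : ℕ} (hj3 : 3 ≤ j) (hj : j ≤ 2 * m) :
    coefS m (tauS m j ζ) j = coefS m ζ j := by
  unfold coefS
  rw [padS_tauS_ne ζ hj3 hj (by omega), padS_tauS_ne ζ hj3 hj (by omega),
    padS_tauS_ne ζ hj3 hj (by omega), padS_tauS_ne ζ hj3 hj (by omega)]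

lemma tauS_invol {j : ℕ} (hj3 : 3 ≤ j) (hj : j ≤ 2 * m) :
    Function.Involutive (tauS m j) := by
  intro ζ
  funext k
  by_cases hk : (k : ℕ) + 1 = j
  · show (if _ then _ else _) = _
    rw [if_pos hk]
    have hcoef : padS (tauS m j ζ) (j-2) + padS (tauS m j ζ) (j-1) + padS (tauS m j ζ) (j+1)
        + padS (tauS m j ζ) (j+2) = coefS m ζ j := coefS_tauS hj3 hj
    rw [hcoef]
    show (if (k : ℕ) + 1 = j then _ else _) + _ = _
    rw [if_pos hk]
    have : ∀ a b : ZMod 2, a + b + b = a := by decide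
    exact this _ _
  · show (if _ then _ else _) = _
    rw [if_neg hk]
    show (if (k : ℕ) + 1 = j then _ else _) = _
    rw [if_neg hk]

def tauPerm (m : ℕ) {j : ℕ} (hj3 : 3 ≤ j) (hj : j ≤ 2 * m) :
    Equiv.Perm (Fin (2 * m) → ZMod 2) := (tauS_invol (m := m) hj3 hj).toPerm

lemma tauPerm_mem {j : ℕ} (hj3 : 3 ≤ j) (hj : j ≤ 2 * m) :
    tauPerm m hj3 hj ∈ GammaS m :=
  Subgroup.subset_closure ⟨j, hj3, hj, rfl⟩

lemma mem_orbit_self' (ζ : Fin (2 * m) → ZMod 2) : ζ ∈ MulAction.orbit (GammaS m) ζ :=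
  MulAction.mem_orbit_self ζ

lemma reach_step {ζ ξ : Fin (2 * m) → ZMod 2} {j : ℕ} (hj3 : 3 ≤ j) (hj : j ≤ 2 * m)
    (h : ξ ∈ MulAction.orbit (GammaS m) ζ) : tauS m j ξ ∈ MulAction.orbit (GammaS m) ζ := by
  obtain ⟨g, rfl⟩ := h
  refine ⟨⟨tauPerm m hj3 hj, tauPerm_mem hj3 hj⟩ * g, ?_⟩
  show (⟨tauPerm m hj3 hj, tauPerm_mem hj3 hj⟩ * g : GammaS m) • ζ = tauS m j (g • ζ)
  rw [mul_smul]
  rfl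

lemma orbit_trans {ζ ξ η : Fin (2 * m) → ZMod 2} (h1 : ξ ∈ MulAction.orbit (GammaS m) ζ)
    (h2 : η ∈ MulAction.orbit (GammaS m) ξ) : η ∈ MulAction.orbit (GammaS m) ζ := by
  rwa [MulAction.orbit_eq_iff.mpr h1] at h2

lemma fixed_orbit_eq {ξ η : Fin (2 * m) → ZMod 2}
    (hfix : ∀ j, 3 ≤ j → j ≤ 2 * m → coefS m ξ j = 0)
    (h : η ∈ MulAction.orbit (GammaS m) ξ) : η = ξ := by
  obtain ⟨⟨g, hg⟩, rfl⟩ := h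
  show g • ξ = ξ
  induction hg using Subgroup.closure_induction with
  | mem g hgmem =>
      obtain ⟨j, hj3, hj, hgj⟩ := hgmem
      show g ξ = ξ
      rw [hgj]
      exact tauS_eq_of_coef_zero (hfix j hj3 hj)
  | one => exact one_smul _ _
  | mul g h _ _ hgf hhf => rw [mul_smul, hhf, hgf]
  | inv g _ hgf =>
      have : g • (g⁻¹ • ξ) = g • ξ := by rw [smul_inv_smul, hgf]
      exact smul_left_cancel g this

def NF (m : ℕ) (ζ : Fin (2 * m) → ZMod 2) : Prop :=
  ∃ j, 3 ≤ j ∧ j ≤ 2 * m ∧ coefS m ζ j ≠ 0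

lemma NF_of_orbit {ζ ξ : Fin (2 * m) → ZMod 2} (h : ξ ∈ MulAction.orbit (GammaS m) ζ)
    (hζ : NF m ζ) : NF m ξ := by
  by_contra hns
  have hfix : ∀ j, 3 ≤ j → j ≤ 2 * m → coefS m ξ j = 0 := by
    intro j hj3 hj
    by_contra hc
    exact hns ⟨j, hj3, hj, hc⟩
  have hζξ : ζ ∈ MulAction.orbit (GammaS m) ξ := MulAction.mem_orbit_symm.mp h
  have := fixed_orbit_eq hfix hζξ
  subst this
  obtain ⟨j, hj3, hj, hc⟩ := hζ
  exact hc (hfix j hj3 hj)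

-- measure
def NV (m : ℕ) (ζ : Fin (2 * m) → ZMod 2) : ℕ :=
  ∑ i ∈ Finset.range (2 * m + 1), (padS ζ i).val * 2 ^ i

lemma sum_two_pow (v : ℕ) : ∑ i ∈ Finset.range v, 2 ^ i = 2 ^ v - 1 := by
  induction v with
  | zero => simp
  | succ n ih =>
      rw [Finset.sum_range_succ, ih]
      have : 1 ≤ 2 ^ n := Nat.one_le_two_pow
      omega

lemma NV_lt {ζ ζ' : Fin (2 * m) → ZMod 2} {v : ℕ} (hv : v ≤ 2 * m)
    (h0 : padS ζ' v = 0) (h1 : padS ζ v = 1)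
    (hagree : ∀ i, v < i → padS ζ' i = padS ζ i) : NV m ζ' < NV m ζ := by
  have hsplit : ∀ ξ : Fin (2 * m) → ZMod 2, NV m ξ =
      (∑ i ∈ Finset.range v, (padS ξ i).val * 2 ^ i) + (padS ξ v).val * 2 ^ v +
      ∑ i ∈ Finset.Ico (v + 1) (2 * m + 1), (padS ξ i).val * 2 ^ i := by
    intro ξ
    rw [NV, ← Finset.sum_range_add_sum_Ico _ (show v ≤ 2*m+1 by omega),
      Finset.sum_eq_sum_Ico_succ_bot (show v < 2*m+1 by omega), ← add_assoc]
  rw [hsplit ζ, hsplit ζ', h0, h1]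
  have htail : ∑ i ∈ Finset.Ico (v + 1) (2 * m + 1), (padS ζ' i).val * 2 ^ i =
      ∑ i ∈ Finset.Ico (v + 1) (2 * m + 1), (padS ζ i).val * 2 ^ i := by
    apply Finset.sum_congr rfl
    intro i hi
    rw [hagree i (by simp at hi; omega)]
  rw [htail]
  have hhead : (∑ i ∈ Finset.range v, (padS ζ' i).val * 2 ^ i) ≤ 2 ^ v - 1 := by
    rw [← sum_two_pow v]
    apply Finset.sum_le_sum
    intro i _
    have : (padS ζ' i).val < 2 := ZMod.val_lt _
    nlinarith [Nat.one_le_two_pow (n := i)]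
  have h1v : (1 : ZMod 2).val = 1 := rfl
  have h0v : (0 : ZMod 2).val = 0 := rfl
  rw [h1v, h0v]
  have : 1 ≤ 2 ^ v := Nat.one_le_two_pow
  omega

end


def ChainP (m p : ℕ) (ζ : Fin (2 * m) → ZMod 2) : Prop :=
  ∀ i, 1 ≤ i → i ≤ p + 2 → padS ζ i = if (p - i) % 3 = 0 ∧ i ≤ p then 1 else 0
def BlockP (m p : ℕ) (ζ : Fin (2 * m) → ZMod 2) : Prop :=
  ∀ i, 1 ≤ i → i ≤ p + 2 → padS ζ i = if (p - i) % 6 < 3 ∧ i ≤ p then 1 else 0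

lemma padS_one_range {m : ℕ} {ζ : Fin (2 * m) → ZMod 2} {i : ℕ} (h : padS ζ i = 1) :
    1 ≤ i ∧ i ≤ 2 * m := by
  by_contra hc
  rw [padS_out ζ i hc] at h
  exact absurd h (by decide)


lemma lemB (m : ℕ) : ∀ p, ∀ ζ : Fin (2 * m) → ZMod 2, 3 ≤ p → p ≤ 2 * m →
    padS ζ p = 1 → padS ζ (p + 1) = 0 → padS ζ (p + 2) = 0 →
    (∃ ζ' ∈ MulAction.orbit (GammaS m) ζ, NV m ζ' < NV m ζ) ∨ ChainP m p ζ ∨ BlockP m p ζ := by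
  intro p
  induction p using Nat.strong_induction_on with
  | _ p ih =>
  intro ζ h3 h2m hp hs1 hs2
  rcases zmod2_cases_s4 (padS ζ (p - 1)) with ha | ha <;>
    rcases zmod2_cases_s4 (padS ζ (p - 2)) with hb | hb
  · rcases zmod2_cases_s4 (padS ζ (p - 3)) with hc | hc
    · by_cases hp4 : 4 ≤ p
      · -- 3a
        left
        obtain ⟨q, rfl⟩ : ∃ q, p = q + 4 := ⟨p - 4, by omega⟩
        have hc' : padS ζ (q + 1) = 0 := hc
        have hb' : padS ζ (q + 2) = 0 := hb
        have ha' : padS ζ (q + 3) = 0 := ha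
        have hp' : padS ζ (q + 4) = 1 := hp
        have hs1' : padS ζ (q + 5) = 0 := hs1
        have hs2' : padS ζ (q + 6) = 0 := hs2
        have j1a : (3:ℕ) ≤ q + 3 := by omega
        have j1b : q + 3 ≤ 2 * m := by omega
        have hco1 : coefS m ζ (q + 3) = 1 := by
          show padS ζ (q+1) + padS ζ (q+2) + padS ζ (q+4) + padS ζ (q+5) = 1
          rw [hc', hb', hp', hs1']; decide
        set ζ1 := tauS m (q + 3) ζ with hζ1
        have z1self : padS ζ1 (q+3) = 1 := by
          rw [hζ1, padS_tauS_self ζ j1a j1b, ha', hco1]; decide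
        have z1ne : ∀ i, i ≠ q + 3 → padS ζ1 i = padS ζ i :=
          fun i hi => padS_tauS_ne ζ j1a j1b hi
        have j2a : (3:ℕ) ≤ q + 4 := by omega
        have j2b : q + 4 ≤ 2 * m := by omega
        have hco2 : coefS m ζ1 (q + 4) = 1 := by
          show padS ζ1 (q+2) + padS ζ1 (q+3) + padS ζ1 (q+5) + padS ζ1 (q+6) = 1
          rw [z1ne (q+2) (by omega), hb', z1self, z1ne (q+5) (by omega), hs1', z1ne (q+6) (by omega), hs2']; decide
        set ζ2 := tauS m (q + 4) ζ1 with hζ2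
        have z2self : padS ζ2 (q+4) = 0 := by
          rw [hζ2, padS_tauS_self ζ1 j2a j2b, z1ne (q+4) (by omega), hp', hco2]; decide
        have z2ne : ∀ i, i ≠ q + 4 → padS ζ2 i = padS ζ1 i :=
          fun i hi => padS_tauS_ne ζ1 j2a j2b hi
        refine ⟨ζ2, reach_step j2a j2b (reach_step j1a j1b (mem_orbit_self' ζ)), ?_⟩
        refine NV_lt (v := q + 4) (by omega) z2self hp' ?_
        intro i hi
        rw [z2ne i (by omega), z1ne i (by omega)]
      · right; left
        obtain rfl : p = 3 := by omega
        intro i hi1 hi2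
        interval_cases i
        · rw [if_neg (by omega)]; exact hb
        · rw [if_neg (by omega)]; exact ha
        · rw [if_pos (by omega)]; exact hp
        · rw [if_neg (by omega)]; exact hs1
        · rw [if_neg (by omega)]; exact hs2
    · have hcr := padS_one_range hc
      rcases zmod2_cases_s4 (padS ζ (p - 4)) with hd | hd
      · rcases zmod2_cases_s4 (padS ζ (p - 5)) with he | he
        · rcases zmod2_cases_s4 (padS ζ (p - 6)) with hf | hf
          · by_cases hp7 : 7 ≤ p
            · -- 3B1
              left
              obtain ⟨q, rfl⟩ : ∃ q, p = q + 7 := ⟨p - 7, by omega⟩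
              have hf' : padS ζ (q + 1) = 0 := hf
              have he' : padS ζ (q + 2) = 0 := he
              have hd' : padS ζ (q + 3) = 0 := hd
              have hc' : padS ζ (q + 4) = 1 := hc
              have hb' : padS ζ (q + 5) = 0 := hb
              have ha' : padS ζ (q + 6) = 0 := ha
              have hp' : padS ζ (q + 7) = 1 := hp
              have hs1' : padS ζ (q + 8) = 0 := hs1
              have hs2' : padS ζ (q + 9) = 0 := hs2
              have j1a : (3:ℕ) ≤ q + 3 := by omega
              have j1b : q + 3 ≤ 2 * m := by omega
              have hco1 : coefS m ζ (q + 3) = 1 := by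
                show padS ζ (q+1) + padS ζ (q+2) + padS ζ (q+4) + padS ζ (q+5) = 1
                rw [hf', he', hc', hb']; decide
              set ζ1 := tauS m (q + 3) ζ with hζ1
              have z1self : padS ζ1 (q+3) = 1 := by
                rw [hζ1, padS_tauS_self ζ j1a j1b, hd', hco1]; decide
              have z1ne : ∀ i, i ≠ q + 3 → padS ζ1 i = padS ζ i :=
                fun i hi => padS_tauS_ne ζ j1a j1b hi
              have j2a : (3:ℕ) ≤ q + 5 := by omega
              have j2b : q + 5 ≤ 2 * m := by omega
              have hco2 : coefS m ζ1 (q + 5) = 1 := by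
                show padS ζ1 (q+3) + padS ζ1 (q+4) + padS ζ1 (q+6) + padS ζ1 (q+7) = 1
                rw [z1self, z1ne (q+4) (by omega), hc', z1ne (q+6) (by omega), ha', z1ne (q+7) (by omega), hp']; decide
              set ζ2 := tauS m (q + 5) ζ1 with hζ2
              have z2self : padS ζ2 (q+5) = 1 := by
                rw [hζ2, padS_tauS_self ζ1 j2a j2b, z1ne (q+5) (by omega), hb', hco2]; decide
              have z2ne : ∀ i, i ≠ q + 5 → padS ζ2 i = padS ζ1 i :=
                fun i hi => padS_tauS_ne ζ1 j2a j2b hi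
              have j3a : (3:ℕ) ≤ q + 7 := by omega
              have j3b : q + 7 ≤ 2 * m := by omega
              have hco3 : coefS m ζ2 (q + 7) = 1 := by
                show padS ζ2 (q+5) + padS ζ2 (q+6) + padS ζ2 (q+8) + padS ζ2 (q+9) = 1
                rw [z2self, z2ne (q+6) (by omega), z1ne (q+6) (by omega), ha', z2ne (q+8) (by omega), z1ne (q+8) (by omega), hs1', z2ne (q+9) (by omega), z1ne (q+9) (by omega), hs2']; decide
              set ζ3 := tauS m (q + 7) ζ2 with hζ3
              have z3self : padS ζ3 (q+7) = 0 := by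
                rw [hζ3, padS_tauS_self ζ2 j3a j3b, z2ne (q+7) (by omega), z1ne (q+7) (by omega), hp', hco3]; decide
              have z3ne : ∀ i, i ≠ q + 7 → padS ζ3 i = padS ζ2 i :=
                fun i hi => padS_tauS_ne ζ2 j3a j3b hi
              refine ⟨ζ3, reach_step j3a j3b (reach_step j2a j2b (reach_step j1a j1b (mem_orbit_self' ζ))), ?_⟩
              refine NV_lt (v := q + 7) (by omega) z3self hp' ?_
              intro i hi
              rw [z3ne i (by omega), z2ne i (by omega), z1ne i (by omega)]
            · right; left
              have hx : p = 4 ∨ p = 5 ∨ p = 6 := by omega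
              rcases hx with hx | hx | hx
              · obtain rfl : p = 4 := by omega
                intro i hi1 hi2
                interval_cases i
                · rw [if_pos (by omega)]; exact hc
                · rw [if_neg (by omega)]; exact hb
                · rw [if_neg (by omega)]; exact ha
                · rw [if_pos (by omega)]; exact hp
                · rw [if_neg (by omega)]; exact hs1
                · rw [if_neg (by omega)]; exact hs2
              · obtain rfl : p = 5 := by omega
                intro i hi1 hi2
                interval_cases i
                · rw [if_neg (by omega)]; exact hd
                · rw [if_pos (by omega)]; exact hc
                · rw [if_neg (by omega)]; exact hb
                · rw [if_neg (by omega)]; exact ha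
                · rw [if_pos (by omega)]; exact hp
                · rw [if_neg (by omega)]; exact hs1
                · rw [if_neg (by omega)]; exact hs2
              · obtain rfl : p = 6 := by omega
                intro i hi1 hi2
                interval_cases i
                · rw [if_neg (by omega)]; exact he
                · rw [if_neg (by omega)]; exact hd
                · rw [if_pos (by omega)]; exact hc
                · rw [if_neg (by omega)]; exact hb
                · rw [if_neg (by omega)]; exact ha
                · rw [if_pos (by omega)]; exact hp
                · rw [if_neg (by omega)]; exact hs1
                · rw [if_neg (by omega)]; exact hs2
          · have hfr := padS_one_range hf
            rcases zmod2_cases_s4 (padS ζ (p - 7)) with hg | hg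
            · by_cases hp9 : 9 ≤ p
              · -- recurse case 3
                obtain ⟨q, rfl⟩ : ∃ q, p = q + 9 := ⟨p - 9, by omega⟩
                have hg' : padS ζ (q + 2) = 0 := hg
                have hf' : padS ζ (q + 3) = 1 := hf
                have he' : padS ζ (q + 4) = 0 := he
                have hd' : padS ζ (q + 5) = 0 := hd
                have hc' : padS ζ (q + 6) = 1 := hc
                have hb' : padS ζ (q + 7) = 0 := hb
                have ha' : padS ζ (q + 8) = 0 := ha
                have hp' : padS ζ (q + 9) = 1 := hp
                have hs1' : padS ζ (q + 10) = 0 := hs1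
                have hs2' : padS ζ (q + 11) = 0 := hs2
                rcases ih (q + 3) (by omega) ζ (by omega) (by omega) hf' he' hd'
                  with hdec | hchain | hblock
                · exact Or.inl hdec
                · right; left
                  intro i hi1 hi2
                  by_cases hlow : i ≤ q + 5
                  · rw [hchain i hi1 (by omega)]
                    exact if_congr (by omega) rfl rfl
                  · have hx : i = q+6 ∨ i = q+7 ∨ i = q+8 ∨ i = q+9 ∨ i = q+10 ∨ i = q+11 := by
                      omega
                    rcases hx with rfl | rfl | rfl | rfl | rfl | rfl
                    · rw [if_pos (by omega)]; exact hc'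
                    · rw [if_neg (by omega)]; exact hb'
                    · rw [if_neg (by omega)]; exact ha'
                    · rw [if_pos (by omega)]; exact hp'
                    · rw [if_neg (by omega)]; exact hs1'
                    · rw [if_neg (by omega)]; exact hs2'
                · exfalso
                  have hbv := hblock (q + 2) (by omega) (by omega)
                  rw [if_pos (by omega), hg'] at hbv
                  exact absurd hbv (by decide)
              · right; left
                have hx : p = 7 ∨ p = 8 := by omega
                rcases hx with hx | hx
                · obtain rfl : p = 7 := by omega
                  intro i hi1 hi2
                  interval_cases i
                  · rw [if_pos (by omega)]; exact hf
                  · rw [if_neg (by omega)]; exact he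
                  · rw [if_neg (by omega)]; exact hd
                  · rw [if_pos (by omega)]; exact hc
                  · rw [if_neg (by omega)]; exact hb
                  · rw [if_neg (by omega)]; exact ha
                  · rw [if_pos (by omega)]; exact hp
                  · rw [if_neg (by omega)]; exact hs1
                  · rw [if_neg (by omega)]; exact hs2
                · obtain rfl : p = 8 := by omega
                  intro i hi1 hi2
                  interval_cases i
                  · rw [if_neg (by omega)]; exact hg
                  · rw [if_pos (by omega)]; exact hf
                  · rw [if_neg (by omega)]; exact he
                  · rw [if_neg (by omega)]; exact hd
                  · rw [if_pos (by omega)]; exact hc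
                  · rw [if_neg (by omega)]; exact hb
                  · rw [if_neg (by omega)]; exact ha
                  · rw [if_pos (by omega)]; exact hp
                  · rw [if_neg (by omega)]; exact hs1
                  · rw [if_neg (by omega)]; exact hs2
            · have hgr := padS_one_range hg
              left
              obtain ⟨q, rfl⟩ : ∃ q, p = q + 8 := ⟨p - 8, by omega⟩
              have hg' : padS ζ (q + 1) = 1 := hg
              have hf' : padS ζ (q + 2) = 1 := hf
              have he' : padS ζ (q + 3) = 0 := he
              have hd' : padS ζ (q + 4) = 0 := hd
              have hc' : padS ζ (q + 5) = 1 := hc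
              have hb' : padS ζ (q + 6) = 0 := hb
              have ha' : padS ζ (q + 7) = 0 := ha
              have hp' : padS ζ (q + 8) = 1 := hp
              have hs1' : padS ζ (q + 9) = 0 := hs1
              have hs2' : padS ζ (q + 10) = 0 := hs2
              have j1a : (3:ℕ) ≤ q + 3 := by omega
              have j1b : q + 3 ≤ 2 * m := by omega
              have hco1 : coefS m ζ (q + 3) = 1 := by
                show padS ζ (q+1) + padS ζ (q+2) + padS ζ (q+4) + padS ζ (q+5) = 1
                rw [hg', hf', hd', hc']; decide
              set ζ1 := tauS m (q + 3) ζ with hζ1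
              have z1self : padS ζ1 (q+3) = 1 := by
                rw [hζ1, padS_tauS_self ζ j1a j1b, he', hco1]; decide
              have z1ne : ∀ i, i ≠ q + 3 → padS ζ1 i = padS ζ i :=
                fun i hi => padS_tauS_ne ζ j1a j1b hi
              have j2a : (3:ℕ) ≤ q + 5 := by omega
              have j2b : q + 5 ≤ 2 * m := by omega
              have hco2 : coefS m ζ1 (q + 5) = 1 := by
                show padS ζ1 (q+3) + padS ζ1 (q+4) + padS ζ1 (q+6) + padS ζ1 (q+7) = 1
                rw [z1self, z1ne (q+4) (by omega), hd', z1ne (q+6) (by omega), hb', z1ne (q+7) (by omega), ha']; decide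
              set ζ2 := tauS m (q + 5) ζ1 with hζ2
              have z2self : padS ζ2 (q+5) = 0 := by
                rw [hζ2, padS_tauS_self ζ1 j2a j2b, z1ne (q+5) (by omega), hc', hco2]; decide
              have z2ne : ∀ i, i ≠ q + 5 → padS ζ2 i = padS ζ1 i :=
                fun i hi => padS_tauS_ne ζ1 j2a j2b hi
              refine ⟨ζ2, reach_step j2a j2b (reach_step j1a j1b (mem_orbit_self' ζ)), ?_⟩
              refine NV_lt (v := q + 5) (by omega) z2self hc' ?_
              intro i hi
              rw [z2ne i (by omega), z1ne i (by omega)]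
        · have her := padS_one_range he
          left
          obtain ⟨q, rfl⟩ : ∃ q, p = q + 6 := ⟨p - 6, by omega⟩
          have he' : padS ζ (q + 1) = 1 := he
          have hd' : padS ζ (q + 2) = 0 := hd
          have hc' : padS ζ (q + 3) = 1 := hc
          have hb' : padS ζ (q + 4) = 0 := hb
          have ha' : padS ζ (q + 5) = 0 := ha
          have hp' : padS ζ (q + 6) = 1 := hp
          have hs1' : padS ζ (q + 7) = 0 := hs1
          have hs2' : padS ζ (q + 8) = 0 := hs2
          have j1a : (3:ℕ) ≤ q + 3 := by omega
          have j1b : q + 3 ≤ 2 * m := by omega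
          have hco1 : coefS m ζ (q + 3) = 1 := by
            show padS ζ (q+1) + padS ζ (q+2) + padS ζ (q+4) + padS ζ (q+5) = 1
            rw [he', hd', hb', ha']; decide
          set ζ1 := tauS m (q + 3) ζ with hζ1
          have z1self : padS ζ1 (q+3) = 0 := by
            rw [hζ1, padS_tauS_self ζ j1a j1b, hc', hco1]; decide
          have z1ne : ∀ i, i ≠ q + 3 → padS ζ1 i = padS ζ i :=
            fun i hi => padS_tauS_ne ζ j1a j1b hi
          refine ⟨ζ1, reach_step j1a j1b (mem_orbit_self' ζ), ?_⟩
          refine NV_lt (v := q + 3) (by omega) z1self hc' ?_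
          intro i hi
          rw [z1ne i (by omega)]
      · have hdr := padS_one_range hd
        left
        obtain ⟨q, rfl⟩ : ∃ q, p = q + 5 := ⟨p - 5, by omega⟩
        have hd' : padS ζ (q + 1) = 1 := hd
        have hc' : padS ζ (q + 2) = 1 := hc
        have hb' : padS ζ (q + 3) = 0 := hb
        have ha' : padS ζ (q + 4) = 0 := ha
        have hp' : padS ζ (q + 5) = 1 := hp
        have hs1' : padS ζ (q + 6) = 0 := hs1
        have hs2' : padS ζ (q + 7) = 0 := hs2
        have j1a : (3:ℕ) ≤ q + 3 := by omega
        have j1b : q + 3 ≤ 2 * m := by omega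
        have hco1 : coefS m ζ (q + 3) = 1 := by
          show padS ζ (q+1) + padS ζ (q+2) + padS ζ (q+4) + padS ζ (q+5) = 1
          rw [hd', hc', ha', hp']; decide
        set ζ1 := tauS m (q + 3) ζ with hζ1
        have z1self : padS ζ1 (q+3) = 1 := by
          rw [hζ1, padS_tauS_self ζ j1a j1b, hb', hco1]; decide
        have z1ne : ∀ i, i ≠ q + 3 → padS ζ1 i = padS ζ i :=
          fun i hi => padS_tauS_ne ζ j1a j1b hi
        have j2a : (3:ℕ) ≤ q + 5 := by omega
        have j2b : q + 5 ≤ 2 * m := by omega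
        have hco2 : coefS m ζ1 (q + 5) = 1 := by
          show padS ζ1 (q+3) + padS ζ1 (q+4) + padS ζ1 (q+6) + padS ζ1 (q+7) = 1
          rw [z1self, z1ne (q+4) (by omega), ha', z1ne (q+6) (by omega), hs1', z1ne (q+7) (by omega), hs2']; decide
        set ζ2 := tauS m (q + 5) ζ1 with hζ2
        have z2self : padS ζ2 (q+5) = 0 := by
          rw [hζ2, padS_tauS_self ζ1 j2a j2b, z1ne (q+5) (by omega), hp', hco2]; decide
        have z2ne : ∀ i, i ≠ q + 5 → padS ζ2 i = padS ζ1 i :=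
          fun i hi => padS_tauS_ne ζ1 j2a j2b hi
        refine ⟨ζ2, reach_step j2a j2b (reach_step j1a j1b (mem_orbit_self' ζ)), ?_⟩
        refine NV_lt (v := q + 5) (by omega) z2self hp' ?_
        intro i hi
        rw [z2ne i (by omega), z1ne i (by omega)]
  · left
    have hbr := padS_one_range hb
    have hco1 : coefS m ζ p = 1 := by
      show padS ζ (p - 2) + padS ζ (p - 1) + padS ζ (p + 1) + padS ζ (p + 2) = 1
      rw [hb, ha, hs1, hs2]; decide
    set ζ1 := tauS m p ζ with hζ1
    have z1self : padS ζ1 p = 0 := by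
      rw [hζ1, padS_tauS_self ζ h3 h2m, hp, hco1]; decide
    refine ⟨ζ1, reach_step h3 h2m (mem_orbit_self' ζ), NV_lt h2m z1self hp ?_⟩
    intro i hi
    exact padS_tauS_ne ζ h3 h2m (by omega)
  · left
    have har := padS_one_range ha
    have hco1 : coefS m ζ p = 1 := by
      show padS ζ (p - 2) + padS ζ (p - 1) + padS ζ (p + 1) + padS ζ (p + 2) = 1
      rw [hb, ha, hs1, hs2]; decide
    set ζ1 := tauS m p ζ with hζ1
    have z1self : padS ζ1 p = 0 := by
      rw [hζ1, padS_tauS_self ζ h3 h2m, hp, hco1]; decide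
    refine ⟨ζ1, reach_step h3 h2m (mem_orbit_self' ζ), NV_lt h2m z1self hp ?_⟩
    intro i hi
    exact padS_tauS_ne ζ h3 h2m (by omega)
  · have har := padS_one_range ha
    rcases zmod2_cases_s4 (padS ζ (p - 3)) with hc | hc
    · rcases zmod2_cases_s4 (padS ζ (p - 4)) with hd | hd
      · rcases zmod2_cases_s4 (padS ζ (p - 5)) with he | he
        · rcases zmod2_cases_s4 (padS ζ (p - 6)) with hf | hf
          · by_cases hp7 : 7 ≤ p
            · -- 2B1
              left
              obtain ⟨q, rfl⟩ : ∃ q, p = q + 7 := ⟨p - 7, by omega⟩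
              have hf' : padS ζ (q + 1) = 0 := hf
              have he' : padS ζ (q + 2) = 0 := he
              have hd' : padS ζ (q + 3) = 0 := hd
              have hc' : padS ζ (q + 4) = 0 := hc
              have hb' : padS ζ (q + 5) = 1 := hb
              have ha' : padS ζ (q + 6) = 1 := ha
              have hp' : padS ζ (q + 7) = 1 := hp
              have hs1' : padS ζ (q + 8) = 0 := hs1
              have hs2' : padS ζ (q + 9) = 0 := hs2
              have j1a : (3:ℕ) ≤ q + 3 := by omega
              have j1b : q + 3 ≤ 2 * m := by omega
              have hco1 : coefS m ζ (q + 3) = 1 := by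
                show padS ζ (q+1) + padS ζ (q+2) + padS ζ (q+4) + padS ζ (q+5) = 1
                rw [hf', he', hc', hb']; decide
              set ζ1 := tauS m (q + 3) ζ with hζ1
              have z1self : padS ζ1 (q+3) = 1 := by
                rw [hζ1, padS_tauS_self ζ j1a j1b, hd', hco1]; decide
              have z1ne : ∀ i, i ≠ q + 3 → padS ζ1 i = padS ζ i :=
                fun i hi => padS_tauS_ne ζ j1a j1b hi
              have j2a : (3:ℕ) ≤ q + 5 := by omega
              have j2b : q + 5 ≤ 2 * m := by omega
              have hco2 : coefS m ζ1 (q + 5) = 1 := by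
                show padS ζ1 (q+3) + padS ζ1 (q+4) + padS ζ1 (q+6) + padS ζ1 (q+7) = 1
                rw [z1self, z1ne (q+4) (by omega), hc', z1ne (q+6) (by omega), ha', z1ne (q+7) (by omega), hp']; decide
              set ζ2 := tauS m (q + 5) ζ1 with hζ2
              have z2self : padS ζ2 (q+5) = 0 := by
                rw [hζ2, padS_tauS_self ζ1 j2a j2b, z1ne (q+5) (by omega), hb', hco2]; decide
              have z2ne : ∀ i, i ≠ q + 5 → padS ζ2 i = padS ζ1 i :=
                fun i hi => padS_tauS_ne ζ1 j2a j2b hi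
              refine ⟨ζ2, reach_step j2a j2b (reach_step j1a j1b (mem_orbit_self' ζ)), ?_⟩
              refine NV_lt (v := q + 5) (by omega) z2self hb' ?_
              intro i hi
              rw [z2ne i (by omega), z1ne i (by omega)]
            · right; right
              have hx : p = 3 ∨ p = 4 ∨ p = 5 ∨ p = 6 := by omega
              rcases hx with hx | hx | hx | hx
              · obtain rfl : p = 3 := by omega
                intro i hi1 hi2
                interval_cases i
                · rw [if_pos (by omega)]; exact hb
                · rw [if_pos (by omega)]; exact ha
                · rw [if_pos (by omega)]; exact hp
                · rw [if_neg (by omega)]; exact hs1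
                · rw [if_neg (by omega)]; exact hs2
              · obtain rfl : p = 4 := by omega
                intro i hi1 hi2
                interval_cases i
                · rw [if_neg (by omega)]; exact hc
                · rw [if_pos (by omega)]; exact hb
                · rw [if_pos (by omega)]; exact ha
                · rw [if_pos (by omega)]; exact hp
                · rw [if_neg (by omega)]; exact hs1
                · rw [if_neg (by omega)]; exact hs2
              · obtain rfl : p = 5 := by omega
                intro i hi1 hi2
                interval_cases i
                · rw [if_neg (by omega)]; exact hd
                · rw [if_neg (by omega)]; exact hc
                · rw [if_pos (by omega)]; exact hb
                · rw [if_pos (by omega)]; exact ha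
                · rw [if_pos (by omega)]; exact hp
                · rw [if_neg (by omega)]; exact hs1
                · rw [if_neg (by omega)]; exact hs2
              · obtain rfl : p = 6 := by omega
                intro i hi1 hi2
                interval_cases i
                · rw [if_neg (by omega)]; exact he
                · rw [if_neg (by omega)]; exact hd
                · rw [if_neg (by omega)]; exact hc
                · rw [if_pos (by omega)]; exact hb
                · rw [if_pos (by omega)]; exact ha
                · rw [if_pos (by omega)]; exact hp
                · rw [if_neg (by omega)]; exact hs1
                · rw [if_neg (by omega)]; exact hs2
          · have hfr := padS_one_range hf
            rcases zmod2_cases_s4 (padS ζ (p - 7)) with hg | hg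
            · by_cases hp8 : 8 ≤ p
              · -- 2B2a
                left
                obtain ⟨q, rfl⟩ : ∃ q, p = q + 8 := ⟨p - 8, by omega⟩
                have hg' : padS ζ (q + 1) = 0 := hg
                have hf' : padS ζ (q + 2) = 1 := hf
                have he' : padS ζ (q + 3) = 0 := he
                have hd' : padS ζ (q + 4) = 0 := hd
                have hc' : padS ζ (q + 5) = 0 := hc
                have hb' : padS ζ (q + 6) = 1 := hb
                have ha' : padS ζ (q + 7) = 1 := ha
                have hp' : padS ζ (q + 8) = 1 := hp
                have hs1' : padS ζ (q + 9) = 0 := hs1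
                have hs2' : padS ζ (q + 10) = 0 := hs2
                have j1a : (3:ℕ) ≤ q + 3 := by omega
                have j1b : q + 3 ≤ 2 * m := by omega
                have hco1 : coefS m ζ (q + 3) = 1 := by
                  show padS ζ (q+1) + padS ζ (q+2) + padS ζ (q+4) + padS ζ (q+5) = 1
                  rw [hg', hf', hd', hc']; decide
                set ζ1 := tauS m (q + 3) ζ with hζ1
                have z1self : padS ζ1 (q+3) = 1 := by
                  rw [hζ1, padS_tauS_self ζ j1a j1b, he', hco1]; decide
                have z1ne : ∀ i, i ≠ q + 3 → padS ζ1 i = padS ζ i :=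
                  fun i hi => padS_tauS_ne ζ j1a j1b hi
                have j2a : (3:ℕ) ≤ q + 5 := by omega
                have j2b : q + 5 ≤ 2 * m := by omega
                have hco2 : coefS m ζ1 (q + 5) = 1 := by
                  show padS ζ1 (q+3) + padS ζ1 (q+4) + padS ζ1 (q+6) + padS ζ1 (q+7) = 1
                  rw [z1self, z1ne (q+4) (by omega), hd', z1ne (q+6) (by omega), hb', z1ne (q+7) (by omega), ha']; decide
                set ζ2 := tauS m (q + 5) ζ1 with hζ2
                have z2self : padS ζ2 (q+5) = 1 := by
                  rw [hζ2, padS_tauS_self ζ1 j2a j2b, z1ne (q+5) (by omega), hc', hco2]; decide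
                have z2ne : ∀ i, i ≠ q + 5 → padS ζ2 i = padS ζ1 i :=
                  fun i hi => padS_tauS_ne ζ1 j2a j2b hi
                have j3a : (3:ℕ) ≤ q + 7 := by omega
                have j3b : q + 7 ≤ 2 * m := by omega
                have hco3 : coefS m ζ2 (q + 7) = 1 := by
                  show padS ζ2 (q+5) + padS ζ2 (q+6) + padS ζ2 (q+8) + padS ζ2 (q+9) = 1
                  rw [z2self, z2ne (q+6) (by omega), z1ne (q+6) (by omega), hb', z2ne (q+8) (by omega), z1ne (q+8) (by omega), hp', z2ne (q+9) (by omega), z1ne (q+9) (by omega), hs1']; decide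
                set ζ3 := tauS m (q + 7) ζ2 with hζ3
                have z3self : padS ζ3 (q+7) = 0 := by
                  rw [hζ3, padS_tauS_self ζ2 j3a j3b, z2ne (q+7) (by omega), z1ne (q+7) (by omega), ha', hco3]; decide
                have z3ne : ∀ i, i ≠ q + 7 → padS ζ3 i = padS ζ2 i :=
                  fun i hi => padS_tauS_ne ζ2 j3a j3b hi
                refine ⟨ζ3, reach_step j3a j3b (reach_step j2a j2b (reach_step j1a j1b (mem_orbit_self' ζ))), ?_⟩
                refine NV_lt (v := q + 7) (by omega) z3self ha' ?_
                intro i hi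
                rw [z3ne i (by omega), z2ne i (by omega), z1ne i (by omega)]
              · right; right
                obtain rfl : p = 7 := by omega
                intro i hi1 hi2
                interval_cases i
                · rw [if_pos (by omega)]; exact hf
                · rw [if_neg (by omega)]; exact he
                · rw [if_neg (by omega)]; exact hd
                · rw [if_neg (by omega)]; exact hc
                · rw [if_pos (by omega)]; exact hb
                · rw [if_pos (by omega)]; exact ha
                · rw [if_pos (by omega)]; exact hp
                · rw [if_neg (by omega)]; exact hs1
                · rw [if_neg (by omega)]; exact hs2
            · have hgr := padS_one_range hg
              rcases zmod2_cases_s4 (padS ζ (p - 8)) with hh | hh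
              · by_cases hp9 : 9 ≤ p
                · -- 2B2b h=0
                  left
                  obtain ⟨q, rfl⟩ : ∃ q, p = q + 9 := ⟨p - 9, by omega⟩
                  have hh' : padS ζ (q + 1) = 0 := hh
                  have hg' : padS ζ (q + 2) = 1 := hg
                  have hf' : padS ζ (q + 3) = 1 := hf
                  have he' : padS ζ (q + 4) = 0 := he
                  have hd' : padS ζ (q + 5) = 0 := hd
                  have hc' : padS ζ (q + 6) = 0 := hc
                  have hb' : padS ζ (q + 7) = 1 := hb
                  have ha' : padS ζ (q + 8) = 1 := ha
                  have hp' : padS ζ (q + 9) = 1 := hp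
                  have hs1' : padS ζ (q + 10) = 0 := hs1
                  have hs2' : padS ζ (q + 11) = 0 := hs2
                  have j1a : (3:ℕ) ≤ q + 3 := by omega
                  have j1b : q + 3 ≤ 2 * m := by omega
                  have hco1 : coefS m ζ (q + 3) = 1 := by
                    show padS ζ (q+1) + padS ζ (q+2) + padS ζ (q+4) + padS ζ (q+5) = 1
                    rw [hh', hg', he', hd']; decide
                  set ζ1 := tauS m (q + 3) ζ with hζ1
                  have z1self : padS ζ1 (q+3) = 0 := by
                    rw [hζ1, padS_tauS_self ζ j1a j1b, hf', hco1]; decide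
                  have z1ne : ∀ i, i ≠ q + 3 → padS ζ1 i = padS ζ i :=
                    fun i hi => padS_tauS_ne ζ j1a j1b hi
                  refine ⟨ζ1, reach_step j1a j1b (mem_orbit_self' ζ), ?_⟩
                  refine NV_lt (v := q + 3) (by omega) z1self hf' ?_
                  intro i hi
                  rw [z1ne i (by omega)]
                · right; right
                  obtain rfl : p = 8 := by omega
                  intro i hi1 hi2
                  interval_cases i
                  · rw [if_pos (by omega)]; exact hg
                  · rw [if_pos (by omega)]; exact hf
                  · rw [if_neg (by omega)]; exact he
                  · rw [if_neg (by omega)]; exact hd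
                  · rw [if_neg (by omega)]; exact hc
                  · rw [if_pos (by omega)]; exact hb
                  · rw [if_pos (by omega)]; exact ha
                  · rw [if_pos (by omega)]; exact hp
                  · rw [if_neg (by omega)]; exact hs1
                  · rw [if_neg (by omega)]; exact hs2
              · have hhr := padS_one_range hh
                obtain ⟨q, rfl⟩ : ∃ q, p = q + 9 := ⟨p - 9, by omega⟩
                have hh' : padS ζ (q + 1) = 1 := hh
                have hg' : padS ζ (q + 2) = 1 := hg
                have hf' : padS ζ (q + 3) = 1 := hf
                have he' : padS ζ (q + 4) = 0 := he
                have hd' : padS ζ (q + 5) = 0 := hd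
                have hc' : padS ζ (q + 6) = 0 := hc
                have hb' : padS ζ (q + 7) = 1 := hb
                have ha' : padS ζ (q + 8) = 1 := ha
                have hp' : padS ζ (q + 9) = 1 := hp
                have hs1' : padS ζ (q + 10) = 0 := hs1
                have hs2' : padS ζ (q + 11) = 0 := hs2
                rcases ih (q + 3) (by omega) ζ (by omega) (by omega) hf' he' hd'
                  with hdec | hchain | hblock
                · exact Or.inl hdec
                · exfalso
                  have hcv := hchain (q + 2) (by omega) (by omega)
                  rw [if_neg (by omega), hg'] at hcv
                  exact absurd hcv (by decide)
                · right; right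
                  intro i hi1 hi2
                  by_cases hlow : i ≤ q + 5
                  · rw [hblock i hi1 (by omega)]
                    exact if_congr (by omega) rfl rfl
                  · have hx : i = q+6 ∨ i = q+7 ∨ i = q+8 ∨ i = q+9 ∨ i = q+10 ∨ i = q+11 := by
                      omega
                    rcases hx with rfl | rfl | rfl | rfl | rfl | rfl
                    · rw [if_neg (by omega)]; exact hc'
                    · rw [if_pos (by omega)]; exact hb'
                    · rw [if_pos (by omega)]; exact ha'
                    · rw [if_pos (by omega)]; exact hp'
                    · rw [if_neg (by omega)]; exact hs1'
                    · rw [if_neg (by omega)]; exact hs2'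
        · have her := padS_one_range he
          left
          obtain ⟨q, rfl⟩ : ∃ q, p = q + 6 := ⟨p - 6, by omega⟩
          have he' : padS ζ (q + 1) = 1 := he
          have hd' : padS ζ (q + 2) = 0 := hd
          have hc' : padS ζ (q + 3) = 0 := hc
          have hb' : padS ζ (q + 4) = 1 := hb
          have ha' : padS ζ (q + 5) = 1 := ha
          have hp' : padS ζ (q + 6) = 1 := hp
          have hs1' : padS ζ (q + 7) = 0 := hs1
          have hs2' : padS ζ (q + 8) = 0 := hs2
          have j1a : (3:ℕ) ≤ q + 3 := by omega
          have j1b : q + 3 ≤ 2 * m := by omega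
          have hco1 : coefS m ζ (q + 3) = 1 := by
            show padS ζ (q+1) + padS ζ (q+2) + padS ζ (q+4) + padS ζ (q+5) = 1
            rw [he', hd', hb', ha']; decide
          set ζ1 := tauS m (q + 3) ζ with hζ1
          have z1self : padS ζ1 (q+3) = 1 := by
            rw [hζ1, padS_tauS_self ζ j1a j1b, hc', hco1]; decide
          have z1ne : ∀ i, i ≠ q + 3 → padS ζ1 i = padS ζ i :=
            fun i hi => padS_tauS_ne ζ j1a j1b hi
          have j2a : (3:ℕ) ≤ q + 5 := by omega
          have j2b : q + 5 ≤ 2 * m := by omega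
          have hco2 : coefS m ζ1 (q + 5) = 1 := by
            show padS ζ1 (q+3) + padS ζ1 (q+4) + padS ζ1 (q+6) + padS ζ1 (q+7) = 1
            rw [z1self, z1ne (q+4) (by omega), hb', z1ne (q+6) (by omega), hp', z1ne (q+7) (by omega), hs1']; decide
          set ζ2 := tauS m (q + 5) ζ1 with hζ2
          have z2self : padS ζ2 (q+5) = 0 := by
            rw [hζ2, padS_tauS_self ζ1 j2a j2b, z1ne (q+5) (by omega), ha', hco2]; decide
          have z2ne : ∀ i, i ≠ q + 5 → padS ζ2 i = padS ζ1 i :=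
            fun i hi => padS_tauS_ne ζ1 j2a j2b hi
          refine ⟨ζ2, reach_step j2a j2b (reach_step j1a j1b (mem_orbit_self' ζ)), ?_⟩
          refine NV_lt (v := q + 5) (by omega) z2self ha' ?_
          intro i hi
          rw [z2ne i (by omega), z1ne i (by omega)]
      · have hdr := padS_one_range hd
        left
        obtain ⟨q, rfl⟩ : ∃ q, p = q + 5 := ⟨p - 5, by omega⟩
        have hd' : padS ζ (q + 1) = 1 := hd
        have hc' : padS ζ (q + 2) = 0 := hc
        have hb' : padS ζ (q + 3) = 1 := hb
        have ha' : padS ζ (q + 4) = 1 := ha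
        have hp' : padS ζ (q + 5) = 1 := hp
        have hs1' : padS ζ (q + 6) = 0 := hs1
        have hs2' : padS ζ (q + 7) = 0 := hs2
        have j1a : (3:ℕ) ≤ q + 3 := by omega
        have j1b : q + 3 ≤ 2 * m := by omega
        have hco1 : coefS m ζ (q + 3) = 1 := by
          show padS ζ (q+1) + padS ζ (q+2) + padS ζ (q+4) + padS ζ (q+5) = 1
          rw [hd', hc', ha', hp']; decide
        set ζ1 := tauS m (q + 3) ζ with hζ1
        have z1self : padS ζ1 (q+3) = 0 := by
          rw [hζ1, padS_tauS_self ζ j1a j1b, hb', hco1]; decide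
        have z1ne : ∀ i, i ≠ q + 3 → padS ζ1 i = padS ζ i :=
          fun i hi => padS_tauS_ne ζ j1a j1b hi
        refine ⟨ζ1, reach_step j1a j1b (mem_orbit_self' ζ), ?_⟩
        refine NV_lt (v := q + 3) (by omega) z1self hb' ?_
        intro i hi
        rw [z1ne i (by omega)]
    · have hcr := padS_one_range hc
      left
      obtain ⟨q, rfl⟩ : ∃ q, p = q + 4 := ⟨p - 4, by omega⟩
      have hc' : padS ζ (q + 1) = 1 := hc
      have hb' : padS ζ (q + 2) = 1 := hb
      have ha' : padS ζ (q + 3) = 1 := ha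
      have hp' : padS ζ (q + 4) = 1 := hp
      have hs1' : padS ζ (q + 5) = 0 := hs1
      have hs2' : padS ζ (q + 6) = 0 := hs2
      have j1a : (3:ℕ) ≤ q + 3 := by omega
      have j1b : q + 3 ≤ 2 * m := by omega
      have hco1 : coefS m ζ (q + 3) = 1 := by
        show padS ζ (q+1) + padS ζ (q+2) + padS ζ (q+4) + padS ζ (q+5) = 1
        rw [hc', hb', hp', hs1']; decide
      set ζ1 := tauS m (q + 3) ζ with hζ1
      have z1self : padS ζ1 (q+3) = 0 := by
        rw [hζ1, padS_tauS_self ζ j1a j1b, ha', hco1]; decide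
      have z1ne : ∀ i, i ≠ q + 3 → padS ζ1 i = padS ζ i :=
        fun i hi => padS_tauS_ne ζ j1a j1b hi
      refine ⟨ζ1, reach_step j1a j1b (mem_orbit_self' ζ), ?_⟩
      refine NV_lt (v := q + 3) (by omega) z1self ha' ?_
      intro i hi
      rw [z1ne i (by omega)]

lemma chainSeq (m : ℕ) (ζ : Fin (2 * m) → ZMod 2) (q : ℕ) (hq : q + 6 ≤ 2 * m)
    (hv1 : padS ζ (q + 1) = 0) (hv2 : padS ζ (q + 2) = 1) (hv3 : padS ζ (q + 3) = 0) (hv4 : padS ζ (q + 4) = 0) (hv5 : padS ζ (q + 5) = 1) (hv6 : padS ζ (q + 6) = 0) (hv7 : padS ζ (q + 7) = 0) (hv8 : padS ζ (q + 8) = 0) :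
    ∃ ζ' ∈ MulAction.orbit (GammaS m) ζ, NV m ζ' < NV m ζ := by
  have j1a : (3:ℕ) ≤ q + 6 := by omega
  have j1b : q + 6 ≤ 2 * m := by omega
  have hco1 : coefS m ζ (q + 6) = 1 := by
    show padS ζ (q+4) + padS ζ (q+5) + padS ζ (q+7) + padS ζ (q+8) = 1
    rw [hv4, hv5, hv7, hv8]; decide
  set ζ1 := tauS m (q + 6) ζ with hζ1
  have z1self : padS ζ1 (q+6) = 1 := by
    rw [hζ1, padS_tauS_self ζ j1a j1b, hv6, hco1]; decide
  have z1ne : ∀ i, i ≠ q + 6 → padS ζ1 i = padS ζ i :=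
    fun i hi => padS_tauS_ne ζ j1a j1b hi
  have j2a : (3:ℕ) ≤ q + 4 := by omega
  have j2b : q + 4 ≤ 2 * m := by omega
  have hco2 : coefS m ζ1 (q + 4) = 1 := by
    show padS ζ1 (q+2) + padS ζ1 (q+3) + padS ζ1 (q+5) + padS ζ1 (q+6) = 1
    rw [z1ne (q+2) (by omega), hv2, z1ne (q+3) (by omega), hv3, z1ne (q+5) (by omega), hv5, z1self]; decide
  set ζ2 := tauS m (q + 4) ζ1 with hζ2
  have z2self : padS ζ2 (q+4) = 1 := by
    rw [hζ2, padS_tauS_self ζ1 j2a j2b, z1ne (q+4) (by omega), hv4, hco2]; decide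
  have z2ne : ∀ i, i ≠ q + 4 → padS ζ2 i = padS ζ1 i :=
    fun i hi => padS_tauS_ne ζ1 j2a j2b hi
  have j3a : (3:ℕ) ≤ q + 3 := by omega
  have j3b : q + 3 ≤ 2 * m := by omega
  have hco3 : coefS m ζ2 (q + 3) = 1 := by
    show padS ζ2 (q+1) + padS ζ2 (q+2) + padS ζ2 (q+4) + padS ζ2 (q+5) = 1
    rw [z2ne (q+1) (by omega), z1ne (q+1) (by omega), hv1, z2ne (q+2) (by omega), z1ne (q+2) (by omega), hv2, z2self, z2ne (q+5) (by omega), z1ne (q+5) (by omega), hv5]; decide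
  set ζ3 := tauS m (q + 3) ζ2 with hζ3
  have z3self : padS ζ3 (q+3) = 1 := by
    rw [hζ3, padS_tauS_self ζ2 j3a j3b, z2ne (q+3) (by omega), z1ne (q+3) (by omega), hv3, hco3]; decide
  have z3ne : ∀ i, i ≠ q + 3 → padS ζ3 i = padS ζ2 i :=
    fun i hi => padS_tauS_ne ζ2 j3a j3b hi
  have j4a : (3:ℕ) ≤ q + 5 := by omega
  have j4b : q + 5 ≤ 2 * m := by omega
  have hco4 : coefS m ζ3 (q + 5) = 1 := by
    show padS ζ3 (q+3) + padS ζ3 (q+4) + padS ζ3 (q+6) + padS ζ3 (q+7) = 1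
    rw [z3self, z3ne (q+4) (by omega), z2self, z3ne (q+6) (by omega), z2ne (q+6) (by omega), z1self, z3ne (q+7) (by omega), z2ne (q+7) (by omega), z1ne (q+7) (by omega), hv7]; decide
  set ζ4 := tauS m (q + 5) ζ3 with hζ4
  have z4self : padS ζ4 (q+5) = 0 := by
    rw [hζ4, padS_tauS_self ζ3 j4a j4b, z3ne (q+5) (by omega), z2ne (q+5) (by omega), z1ne (q+5) (by omega), hv5, hco4]; decide
  have z4ne : ∀ i, i ≠ q + 5 → padS ζ4 i = padS ζ3 i :=
    fun i hi => padS_tauS_ne ζ3 j4a j4b hi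
  have j5a : (3:ℕ) ≤ q + 6 := by omega
  have j5b : q + 6 ≤ 2 * m := by omega
  have hco5 : coefS m ζ4 (q + 6) = 1 := by
    show padS ζ4 (q+4) + padS ζ4 (q+5) + padS ζ4 (q+7) + padS ζ4 (q+8) = 1
    rw [z4ne (q+4) (by omega), z3ne (q+4) (by omega), z2self, z4self, z4ne (q+7) (by omega), z3ne (q+7) (by omega), z2ne (q+7) (by omega), z1ne (q+7) (by omega), hv7, z4ne (q+8) (by omega), z3ne (q+8) (by omega), z2ne (q+8) (by omega), z1ne (q+8) (by omega), hv8]; decide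
  set ζ5 := tauS m (q + 6) ζ4 with hζ5
  have z5self : padS ζ5 (q+6) = 0 := by
    rw [hζ5, padS_tauS_self ζ4 j5a j5b, z4ne (q+6) (by omega), z3ne (q+6) (by omega), z2ne (q+6) (by omega), z1self, hco5]; decide
  have z5ne : ∀ i, i ≠ q + 6 → padS ζ5 i = padS ζ4 i :=
    fun i hi => padS_tauS_ne ζ4 j5a j5b hi
  have hfin : padS ζ5 (q+5) = 0 := by rw [z5ne (q+5) (by omega), z4self]
  refine ⟨ζ5, reach_step j5a j5b (reach_step j4a j4b (reach_step j3a j3b (reach_step j2a j2b (reach_step j1a j1b (mem_orbit_self' ζ))))), NV_lt (v := q + 5) (by omega) hfin hv5 ?_⟩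
  intro i hi
  by_cases hr6 : i = q + 6
  · subst hr6
    rw [z5self, hv6]
  rw [z5ne i (by omega), z4ne i (by omega), z3ne i (by omega), z2ne i (by omega), z1ne i (by omega)]

lemma blockSeq (m : ℕ) (ζ : Fin (2 * m) → ZMod 2) (q : ℕ) (hq : q + 8 ≤ 2 * m)
    (hv1 : padS ζ (q + 1) = 0) (hv2 : padS ζ (q + 2) = 0) (hv3 : padS ζ (q + 3) = 0) (hv4 : padS ζ (q + 4) = 1) (hv5 : padS ζ (q + 5) = 1) (hv6 : padS ζ (q + 6) = 1) (hv7 : padS ζ (q + 7) = 0) (hv8 : padS ζ (q + 8) = 0) (hv9 : padS ζ (q + 9) = 0) (hv10 : padS ζ (q + 10) = 0) :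
    ∃ ζ' ∈ MulAction.orbit (GammaS m) ζ, NV m ζ' < NV m ζ := by
  have j1a : (3:ℕ) ≤ q + 8 := by omega
  have j1b : q + 8 ≤ 2 * m := by omega
  have hco1 : coefS m ζ (q + 8) = 1 := by
    show padS ζ (q+6) + padS ζ (q+7) + padS ζ (q+9) + padS ζ (q+10) = 1
    rw [hv6, hv7, hv9, hv10]; decide
  set ζ1 := tauS m (q + 8) ζ with hζ1
  have z1self : padS ζ1 (q+8) = 1 := by
    rw [hζ1, padS_tauS_self ζ j1a j1b, hv8, hco1]; decide
  have z1ne : ∀ i, i ≠ q + 8 → padS ζ1 i = padS ζ i :=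
    fun i hi => padS_tauS_ne ζ j1a j1b hi
  have j2a : (3:ℕ) ≤ q + 6 := by omega
  have j2b : q + 6 ≤ 2 * m := by omega
  have hco2 : coefS m ζ1 (q + 6) = 1 := by
    show padS ζ1 (q+4) + padS ζ1 (q+5) + padS ζ1 (q+7) + padS ζ1 (q+8) = 1
    rw [z1ne (q+4) (by omega), hv4, z1ne (q+5) (by omega), hv5, z1ne (q+7) (by omega), hv7, z1self]; decide
  set ζ2 := tauS m (q + 6) ζ1 with hζ2
  have z2self : padS ζ2 (q+6) = 0 := by
    rw [hζ2, padS_tauS_self ζ1 j2a j2b, z1ne (q+6) (by omega), hv6, hco2]; decide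
  have z2ne : ∀ i, i ≠ q + 6 → padS ζ2 i = padS ζ1 i :=
    fun i hi => padS_tauS_ne ζ1 j2a j2b hi
  have j3a : (3:ℕ) ≤ q + 4 := by omega
  have j3b : q + 4 ≤ 2 * m := by omega
  have hco3 : coefS m ζ2 (q + 4) = 1 := by
    show padS ζ2 (q+2) + padS ζ2 (q+3) + padS ζ2 (q+5) + padS ζ2 (q+6) = 1
    rw [z2ne (q+2) (by omega), z1ne (q+2) (by omega), hv2, z2ne (q+3) (by omega), z1ne (q+3) (by omega), hv3, z2ne (q+5) (by omega), z1ne (q+5) (by omega), hv5, z2self]; decide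
  set ζ3 := tauS m (q + 4) ζ2 with hζ3
  have z3self : padS ζ3 (q+4) = 0 := by
    rw [hζ3, padS_tauS_self ζ2 j3a j3b, z2ne (q+4) (by omega), z1ne (q+4) (by omega), hv4, hco3]; decide
  have z3ne : ∀ i, i ≠ q + 4 → padS ζ3 i = padS ζ2 i :=
    fun i hi => padS_tauS_ne ζ2 j3a j3b hi
  have j4a : (3:ℕ) ≤ q + 3 := by omega
  have j4b : q + 3 ≤ 2 * m := by omega
  have hco4 : coefS m ζ3 (q + 3) = 1 := by
    show padS ζ3 (q+1) + padS ζ3 (q+2) + padS ζ3 (q+4) + padS ζ3 (q+5) = 1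
    rw [z3ne (q+1) (by omega), z2ne (q+1) (by omega), z1ne (q+1) (by omega), hv1, z3ne (q+2) (by omega), z2ne (q+2) (by omega), z1ne (q+2) (by omega), hv2, z3self, z3ne (q+5) (by omega), z2ne (q+5) (by omega), z1ne (q+5) (by omega), hv5]; decide
  set ζ4 := tauS m (q + 3) ζ3 with hζ4
  have z4self : padS ζ4 (q+3) = 1 := by
    rw [hζ4, padS_tauS_self ζ3 j4a j4b, z3ne (q+3) (by omega), z2ne (q+3) (by omega), z1ne (q+3) (by omega), hv3, hco4]; decide
  have z4ne : ∀ i, i ≠ q + 3 → padS ζ4 i = padS ζ3 i :=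
    fun i hi => padS_tauS_ne ζ3 j4a j4b hi
  have j5a : (3:ℕ) ≤ q + 5 := by omega
  have j5b : q + 5 ≤ 2 * m := by omega
  have hco5 : coefS m ζ4 (q + 5) = 1 := by
    show padS ζ4 (q+3) + padS ζ4 (q+4) + padS ζ4 (q+6) + padS ζ4 (q+7) = 1
    rw [z4self, z4ne (q+4) (by omega), z3self, z4ne (q+6) (by omega), z3ne (q+6) (by omega), z2self, z4ne (q+7) (by omega), z3ne (q+7) (by omega), z2ne (q+7) (by omega), z1ne (q+7) (by omega), hv7]; decide
  set ζ5 := tauS m (q + 5) ζ4 with hζ5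
  have z5self : padS ζ5 (q+5) = 0 := by
    rw [hζ5, padS_tauS_self ζ4 j5a j5b, z4ne (q+5) (by omega), z3ne (q+5) (by omega), z2ne (q+5) (by omega), z1ne (q+5) (by omega), hv5, hco5]; decide
  have z5ne : ∀ i, i ≠ q + 5 → padS ζ5 i = padS ζ4 i :=
    fun i hi => padS_tauS_ne ζ4 j5a j5b hi
  have j6a : (3:ℕ) ≤ q + 6 := by omega
  have j6b : q + 6 ≤ 2 * m := by omega
  have hco6 : coefS m ζ5 (q + 6) = 1 := by
    show padS ζ5 (q+4) + padS ζ5 (q+5) + padS ζ5 (q+7) + padS ζ5 (q+8) = 1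
    rw [z5ne (q+4) (by omega), z4ne (q+4) (by omega), z3self, z5self, z5ne (q+7) (by omega), z4ne (q+7) (by omega), z3ne (q+7) (by omega), z2ne (q+7) (by omega), z1ne (q+7) (by omega), hv7, z5ne (q+8) (by omega), z4ne (q+8) (by omega), z3ne (q+8) (by omega), z2ne (q+8) (by omega), z1self]; decide
  set ζ6 := tauS m (q + 6) ζ5 with hζ6
  have z6self : padS ζ6 (q+6) = 1 := by
    rw [hζ6, padS_tauS_self ζ5 j6a j6b, z5ne (q+6) (by omega), z4ne (q+6) (by omega), z3ne (q+6) (by omega), z2self, hco6]; decide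
  have z6ne : ∀ i, i ≠ q + 6 → padS ζ6 i = padS ζ5 i :=
    fun i hi => padS_tauS_ne ζ5 j6a j6b hi
  have j7a : (3:ℕ) ≤ q + 8 := by omega
  have j7b : q + 8 ≤ 2 * m := by omega
  have hco7 : coefS m ζ6 (q + 8) = 1 := by
    show padS ζ6 (q+6) + padS ζ6 (q+7) + padS ζ6 (q+9) + padS ζ6 (q+10) = 1
    rw [z6self, z6ne (q+7) (by omega), z5ne (q+7) (by omega), z4ne (q+7) (by omega), z3ne (q+7) (by omega), z2ne (q+7) (by omega), z1ne (q+7) (by omega), hv7, z6ne (q+9) (by omega), z5ne (q+9) (by omega), z4ne (q+9) (by omega), z3ne (q+9) (by omega), z2ne (q+9) (by omega), z1ne (q+9) (by omega), hv9, z6ne (q+10) (by omega), z5ne (q+10) (by omega), z4ne (q+10) (by omega), z3ne (q+10) (by omega), z2ne (q+10) (by omega), z1ne (q+10) (by omega), hv10]; decide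
  set ζ7 := tauS m (q + 8) ζ6 with hζ7
  have z7self : padS ζ7 (q+8) = 0 := by
    rw [hζ7, padS_tauS_self ζ6 j7a j7b, z6ne (q+8) (by omega), z5ne (q+8) (by omega), z4ne (q+8) (by omega), z3ne (q+8) (by omega), z2ne (q+8) (by omega), z1self, hco7]; decide
  have z7ne : ∀ i, i ≠ q + 8 → padS ζ7 i = padS ζ6 i :=
    fun i hi => padS_tauS_ne ζ6 j7a j7b hi
  have hfin : padS ζ7 (q+5) = 0 := by rw [z7ne (q+5) (by omega), z6ne (q+5) (by omega), z5self]
  refine ⟨ζ7, reach_step j7a j7b (reach_step j6a j6b (reach_step j5a j5b (reach_step j4a j4b (reach_step j3a j3b (reach_step j2a j2b (reach_step j1a j1b (mem_orbit_self' ζ))))))), NV_lt (v := q + 5) (by omega) hfin hv5 ?_⟩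
  intro i hi
  by_cases hr6 : i = q + 6
  · subst hr6
    rw [z7ne (q+6) (by omega), z6self, hv6]
  by_cases hr8 : i = q + 8
  · subst hr8
    rw [z7self, hv8]
  rw [z7ne i (by omega), z6ne i (by omega), z5ne i (by omega), z4ne i (by omega), z3ne i (by omega), z2ne i (by omega), z1ne i (by omega)]


lemma padS_coord {m : ℕ} (ζ : Fin (2 * m) → ZMod 2) (x : Fin (2 * m)) :
    padS ζ ((x : ℕ) + 1) = ζ x := by
  have hx : 1 ≤ (x : ℕ) + 1 ∧ (x : ℕ) + 1 ≤ 2 * m := ⟨by omega, by have := x.isLt; omega⟩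
  rw [padS, dif_pos hx]
  exact congrArg ζ (Fin.ext rfl)

lemma chainFixed (m : ℕ) (ζ : Fin (2 * m) → ZMod 2) (hsh : ChainP m (2 * m) ζ)
    (j : ℕ) (hj3 : 3 ≤ j) (hj : j ≤ 2 * m) : coefS m ζ j = 0 := by
  have hsh' : ∀ i, 1 ≤ i → padS ζ i = if (2 * m - i) % 3 = 0 ∧ i ≤ 2 * m then 1 else 0 := by
    intro i hi1
    by_cases hir : i ≤ 2 * m + 2
    · exact hsh i hi1 hir
    · rw [padS_out ζ i (by omega), if_neg (by omega)]
  show padS ζ (j - 2) + padS ζ (j - 1) + padS ζ (j + 1) + padS ζ (j + 2) = 0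
  rw [hsh' (j - 2) (by omega), hsh' (j - 1) (by omega), hsh' (j + 1) (by omega),
    hsh' (j + 2) (by omega)]
  have h3 : (2 * m - j) % 3 = 0 ∨ (2 * m - j) % 3 = 1 ∨ (2 * m - j) % 3 = 2 := by omega
  rcases h3 with h | h | h <;> split_ifs <;> first | decide | omega

lemma blockFixed (m : ℕ) (ζ : Fin (2 * m) → ZMod 2) (k : ℕ) (hk6 : 6 ≤ k) (hk : k ≤ 2 * m)
    (hk1 : 2 * m ≤ k + 1) (hsh : BlockP m k ζ)
    (j : ℕ) (hj3 : 3 ≤ j) (hj : j ≤ 2 * m) : coefS m ζ j = 0 := by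
  have hsh' : ∀ i, 1 ≤ i → padS ζ i = if (k - i) % 6 < 3 ∧ i ≤ k then 1 else 0 := by
    intro i hi1
    by_cases hir : i ≤ k + 2
    · exact hsh i hi1 hir
    · rw [padS_out ζ i (by omega), if_neg (by omega)]
  show padS ζ (j - 2) + padS ζ (j - 1) + padS ζ (j + 1) + padS ζ (j + 2) = 0
  rw [hsh' (j - 2) (by omega), hsh' (j - 1) (by omega), hsh' (j + 1) (by omega),
    hsh' (j + 2) (by omega)]
  have h6 : (k - j) % 6 = 0 ∨ (k - j) % 6 = 1 ∨ (k - j) % 6 = 2 ∨ (k - j) % 6 = 3 ∨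
      (k - j) % 6 = 4 ∨ (k - j) % 6 = 5 := by omega
  rcases h6 with h | h | h | h | h | h <;> split_ifs <;> first | decide | omega

lemma mainAux (m : ℕ) (hm : 2 < m) : ∀ n, ∀ ζ : Fin (2 * m) → ZMod 2, NV m ζ = n → NF m ζ →
    ∃ ξ ∈ MulAction.orbit (GammaS m) ζ,
      ((∀ i, 5 ≤ i → padS ξ i = 0) ∧
        ¬ (padS ξ 1 = 0 ∧ padS ξ 2 = 0 ∧ padS ξ 3 = 0 ∧ padS ξ 4 = 0)) ∨
      ξ = fun k : Fin (2 * m) =>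
        if (k : ℕ) + 1 = 3 ∨ (k : ℕ) + 1 = 4 ∨ (k : ℕ) + 1 = 5 then 1 else 0 := by
  intro n
  induction n using Nat.strong_induction_on with
  | _ n ihn =>
  intro ζ hn hNF
  by_cases hshort : ∀ i, 5 ≤ i → padS ζ i = 0
  · refine ⟨ζ, mem_orbit_self' ζ, Or.inl ⟨hshort, ?_⟩⟩
    rintro ⟨e1, e2, e3, e4⟩
    have hall : ∀ i, padS ζ i = 0 := by
      intro i
      rcases (by omega : i = 0 ∨ i = 1 ∨ i = 2 ∨ i = 3 ∨ i = 4 ∨ 5 ≤ i) with h | h | h | h | h | h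
      · rw [h]; exact padS_out ζ 0 (by omega)
      · rw [h]; exact e1
      · rw [h]; exact e2
      · rw [h]; exact e3
      · rw [h]; exact e4
      · exact hshort i h
    obtain ⟨j, hj3, hj2, hcne⟩ := hNF
    refine hcne ?_
    show padS ζ (j - 2) + padS ζ (j - 1) + padS ζ (j + 1) + padS ζ (j + 2) = 0
    rw [hall, hall, hall, hall]; decide
  · push_neg at hshort
    obtain ⟨i0, hi05, hi0⟩ := hshort
    have hi01 : padS ζ i0 = 1 := by
      rcases zmod2_cases_s4 (padS ζ i0) with h | h
      · exact absurd h hi0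
      · exact h
    have hi0r := padS_one_range hi01
    have hS : ∀ S : Finset ℕ, S = (Finset.Icc 1 (2 * m)).filter (fun i => padS ζ i = 1) →
        ∃ k, padS ζ k = 1 ∧ 1 ≤ k ∧ k ≤ 2 * m ∧ 5 ≤ k ∧ ∀ i, k < i → padS ζ i = 0 := by
      intro S hS
      subst hS
      have hi0S : i0 ∈ (Finset.Icc 1 (2 * m)).filter (fun i => padS ζ i = 1) := by
        rw [Finset.mem_filter, Finset.mem_Icc]
        exact ⟨⟨hi0r.1, hi0r.2⟩, hi01⟩
      set S := (Finset.Icc 1 (2 * m)).filter (fun i => padS ζ i = 1)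
      have hSne : S.Nonempty := ⟨i0, hi0S⟩
      have hkmem := S.max'_mem hSne
      have hkm2 := Finset.mem_filter.mp hkmem
      have hkm3 := Finset.mem_Icc.mp hkm2.1
      refine ⟨S.max' hSne, hkm2.2, hkm3.1, hkm3.2,
        le_trans hi05 (Finset.le_max' S i0 hi0S), ?_⟩
      intro i hik
      rcases zmod2_cases_s4 (padS ζ i) with h | h
      · exact h
      · have hr := padS_one_range h
        have hiS : i ∈ S := by
          rw [Finset.mem_filter, Finset.mem_Icc]
          exact ⟨⟨hr.1, hr.2⟩, h⟩
        have := Finset.le_max' S i hiS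
        omega
    obtain ⟨k, hkpad, hk1r, hk2r, hk5, habove⟩ := hS _ rfl
    have hkr : 1 ≤ k ∧ k ≤ 2 * m := ⟨hk1r, hk2r⟩
    rcases lemB m k ζ (by omega) hkr.2 hkpad (habove _ (by omega)) (habove _ (by omega))
      with hdec | hchain | hblock
    · obtain ⟨ζ', hζ'o, hζ'lt⟩ := hdec
      obtain ⟨ξ, hξo, hgood⟩ := ihn (NV m ζ') (by omega) ζ' rfl (NF_of_orbit hζ'o hNF)
      exact ⟨ξ, orbit_trans hζ'o hξo, hgood⟩
    · by_cases hk1 : k + 1 ≤ 2 * m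
      · obtain ⟨q, rfl⟩ : ∃ q, k = q + 5 := ⟨k - 5, by omega⟩
        have hdec := chainSeq m ζ q (by omega)
          (by rw [hchain (q+1) (by omega) (by omega), if_neg (by omega)])
          (by rw [hchain (q+2) (by omega) (by omega), if_pos (by omega)])
          (by rw [hchain (q+3) (by omega) (by omega), if_neg (by omega)])
          (by rw [hchain (q+4) (by omega) (by omega), if_neg (by omega)])
          (by rw [hchain (q+5) (by omega) (by omega), if_pos (by omega)])
          (habove (q+6) (by omega)) (habove (q+7) (by omega)) (habove (q+8) (by omega))
        obtain ⟨ζ', hζ'o, hζ'lt⟩ := hdec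
        obtain ⟨ξ, hξo, hgood⟩ := ihn (NV m ζ') (by omega) ζ' rfl (NF_of_orbit hζ'o hNF)
        exact ⟨ξ, orbit_trans hζ'o hξo, hgood⟩
      · exfalso
        obtain ⟨j, hj3, hj2, hcne⟩ := hNF
        have hkeq : k = 2 * m := by omega
        exact hcne (chainFixed m ζ (hkeq ▸ hchain) j hj3 hj2)
    · by_cases hk5' : k = 5
      · refine ⟨ζ, mem_orbit_self' ζ, Or.inr ?_⟩
        funext x
        rw [← padS_coord ζ x]
        by_cases hxr : (x : ℕ) + 1 ≤ 7
        · rw [hblock ((x : ℕ) + 1) (by omega) (by omega)]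
          exact if_congr (by omega) rfl rfl
        · rw [habove _ (by omega), if_neg (by omega)]
      · by_cases hk2 : k + 2 ≤ 2 * m
        · obtain ⟨q, rfl⟩ : ∃ q, k = q + 6 := ⟨k - 6, by omega⟩
          have hdec := blockSeq m ζ q (by omega)
            (by rw [hblock (q+1) (by omega) (by omega), if_neg (by omega)])
            (by rw [hblock (q+2) (by omega) (by omega), if_neg (by omega)])
            (by rw [hblock (q+3) (by omega) (by omega), if_neg (by omega)])
            (by rw [hblock (q+4) (by omega) (by omega), if_pos (by omega)])
            (by rw [hblock (q+5) (by omega) (by omega), if_pos (by omega)])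
            (by rw [hblock (q+6) (by omega) (by omega), if_pos (by omega)])
            (habove (q+7) (by omega)) (habove (q+8) (by omega))
            (habove (q+9) (by omega)) (habove (q+10) (by omega))
          obtain ⟨ζ', hζ'o, hζ'lt⟩ := hdec
          obtain ⟨ξ, hξo, hgood⟩ := ihn (NV m ζ') (by omega) ζ' rfl (NF_of_orbit hζ'o hNF)
          exact ⟨ξ, orbit_trans hζ'o hξo, hgood⟩
        · exfalso
          obtain ⟨j, hj3, hj2, hcne⟩ := hNF
          exact hcne (blockFixed m ζ k (by omega) hkr.2 (by omega) hblock j hj3 hj2)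


/-- Every nontrivial orbit of the `Γ_S`-action on `𝔽₂^{2m}`, `m > 2`, contains either an
element of the form `(ζ_1, ζ_2, ζ_3, ζ_4, 0, …, 0)` with not all of `ζ_1, …, ζ_4` zero,
or the element `ζ̄ = (0,0,1,1,1,0,…,0)`. -/
theorem GammaS_nontrivial_orbit_representative (m : ℕ) (hm : 2 < m)
    (ζ : Fin (2 * m) → ZMod 2) (hζ : ¬ ∀ j, 3 ≤ j → j ≤ 2 * m → tauS m j ζ = ζ) :
    ∃ ξ ∈ MulAction.orbit (GammaS m) ζ,
      ((∀ i, 5 ≤ i → padS ξ i = 0) ∧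
        ¬ (padS ξ 1 = 0 ∧ padS ξ 2 = 0 ∧ padS ξ 3 = 0 ∧ padS ξ 4 = 0)) ∨
      ξ = fun k : Fin (2 * m) =>
        if (k : ℕ) + 1 = 3 ∨ (k : ℕ) + 1 = 4 ∨ (k : ℕ) + 1 = 5 then 1 else 0 := by
  have hNF : NF m ζ := by
    push_neg at hζ
    obtain ⟨j, hj3, hj2, hne⟩ := hζ
    exact ⟨j, hj3, hj2, fun hc => hne (tauS_eq_of_coef_zero hc)⟩
  exact mainAux m hm (NV m ζ) ζ rfl hNF
end
end

section
/- Fix n ≥ 2, t ∈ {1, …, n−1}, a pair (u,v) ∈ W^t × W^t, and a reduced word i ∈ R(u,v). For every vector ν ∈ 𝔽₂^L, the affine Γ_U(ν)-action on 𝔽₂^U has at least one fixed point, i.e. there exists ξ* ∈ 𝔽₂^U fixed by every generator of the Γ_U(ν)-action. -/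
open scoped Classical

noncomputable section

/-- The Coxeter matrix of the Coxeter group `W^t` on generators `s_1, …, s_n` (we index the
generators by `Fin n`, with `i : Fin n` corresponding to the 1-based index `i + 1`):
`(s_i s_j)² = 1` for `|i − j| > 1`, `(s_i s_{i+1})³ = 1` for `i ≠ t`, `(s_t s_{t+1})⁴ = 1`. -/
def coxMt (n t : ℕ) : CoxeterMatrix (Fin n) where
  M := fun i j =>
    if i = j then 1
    else if (i : ℕ) + 1 = (j : ℕ) ∨ (j : ℕ) + 1 = (i : ℕ) then
      (if min (i : ℕ) (j : ℕ) + 1 = t then 4 else 3)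
    else 2
  isSymm := by
    refine Matrix.IsSymm.ext fun i j => ?_
    show (if j = i then (1 : ℕ) else if (j : ℕ) + 1 = (i : ℕ) ∨ (i : ℕ) + 1 = (j : ℕ) then
        (if min (j : ℕ) (i : ℕ) + 1 = t then 4 else 3) else 2) =
      (if i = j then (1 : ℕ) else if (i : ℕ) + 1 = (j : ℕ) ∨ (j : ℕ) + 1 = (i : ℕ) then
        (if min (i : ℕ) (j : ℕ) + 1 = t then 4 else 3) else 2)
    rcases eq_or_ne i j with h | h
    · simp [h]
    · simp only [if_neg h, if_neg (Ne.symm h), or_comm, min_comm]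
  diagonal := fun i => by simp
  off_diagonal := fun i j h => by
    simp only [if_neg h]
    split_ifs <;> omega

/-- The Coxeter group `W^t`. -/
def Wgrp (n t : ℕ) : Type := (coxMt n t).Group

instance (n t : ℕ) : Group (Wgrp n t) := by unfold Wgrp; infer_instance

/-- The Coxeter system of `W^t`. -/
def cSys (n t : ℕ) : CoxeterSystem (coxMt n t) (Wgrp n t) := (coxMt n t).toCoxeterSystem

/-- The simple reflection of `W^t` corresponding to a letter `z ∈ {−n, …, −1, 1, …, n}`
(with 1-based absolute value `|z|`). -/
def toGen (n t : ℕ) (z : ℤ) : Wgrp n t :=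
  if h : 1 ≤ z.natAbs ∧ z.natAbs ≤ n then (cSys n t).simple ⟨z.natAbs - 1, by omega⟩ else 1

/-- `w` is a reduced word for the pair `(u, v) ∈ W^t × W^t`: a word in the alphabet
`{−n, …, −1, 1, …, n}` which is a shuffle of a reduced word for `u` written in the negative
letters and a reduced word for `v` written in the positive letters. -/
def IsRedPair (n t : ℕ) (u v : Wgrp n t) (w : List ℤ) : Prop :=
  (∀ z ∈ w, 1 ≤ z.natAbs ∧ z.natAbs ≤ n) ∧
  ((w.filter (fun z => z < 0)).map (toGen n t)).prod = u ∧
  (w.filter (fun z => z < 0)).length = (cSys n t).length u ∧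
  ((w.filter (fun z => 0 < z)).map (toGen n t)).prod = v ∧
  (w.filter (fun z => 0 < z)).length = (cSys n t).length v

/-- The letter `i_k` of the word `w` (`k` is 1-indexed; `0` if out of range). -/
def letr (w : List ℤ) (k : ℕ) : ℤ := w.getD (k - 1) 0

/-- `|i_k|`, the (1-based) height of the `k`-th letter. -/
def habs (w : List ℤ) (k : ℕ) : ℕ := (letr w k).natAbs

/-- `l⁻`: the largest `k < l` with `|i_k| = |i_l|` (and `0` if there is none). -/
def lminus (w : List ℤ) (l : ℕ) : ℕ :=
  ((Finset.Ico 1 l).filter (fun k => habs w k = habs w l)).sup id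

/-- Adjacency in the Coxeter graph `Π^t` (on 1-based vertices `1, …, n`). -/
def adjPi (p q : ℕ) : Prop := p + 1 = q ∨ q + 1 = p

/-- The edge condition of `Σ(i)` for `k < l` (conditions (i), (ii), (iii)). -/
def EdgeHalf (w : List ℤ) (k l : ℕ) : Prop :=
  1 ≤ k ∧ k < l ∧ l ≤ w.length ∧
  (k = lminus w l ∨
   (lminus w k < lminus w l ∧ lminus w l < k ∧ adjPi (habs w k) (habs w l) ∧
     (0 < letr w (lminus w l) ↔ 0 < letr w k)) ∨
   (lminus w l < lminus w k ∧ lminus w k < k ∧ adjPi (habs w k) (habs w l) ∧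
     (0 < letr w (lminus w k) ↔ ¬ 0 < letr w k)))

/-- `{k, l}` is an edge of `Σ(i)`. -/
def isEdge (w : List ℤ) (k l : ℕ) : Prop := EdgeHalf w k l ∨ EdgeHalf w l k

/-- The graph `Σ(i)` (as a simple graph on `ℕ`; all vertices outside `{1, …, d}`
are isolated). -/
def SigGraph (w : List ℤ) : SimpleGraph ℕ where
  Adj := isEdge w
  symm := ⟨fun k l h => h.symm⟩
  loopless := ⟨fun k h => by
    rcases h with h | h <;> exact absurd h.2.1 (lt_irrefl k)⟩

/-- The relevant entries of the Cartan matrix `A^t` (1-based indices):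
`a_{t,t+1} = 2`, `a_{t+1,t} = 1`, `a_{i,i+1} = a_{i+1,i} = 1` for `i ≠ t`, and
`a_{pq} = 0` for `|p − q| ≥ 2`. -/
def Amat (t p q : ℕ) : ℕ :=
  if p = t ∧ q = t + 1 then 2
  else if p + 1 = q ∨ q + 1 = p then 1 else 0

/-- `Ω_{kl}`: equals `1` if `|i_k| = |i_l|`, and `a_{|i_k|,|i_l|} mod 2` otherwise. -/
def Om (t : ℕ) (w : List ℤ) (k l : ℕ) : ZMod 2 :=
  if habs w k = habs w l then 1 else (Amat t (habs w k) (habs w l) : ZMod 2)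

/-- The transvection `τ_r` on `𝔽₂^d`: it replaces `ξ_r` by
`ξ_r + Σ_{{k,r} ∈ Σ(i)} Ω_{kr} ξ_k` (coordinates are 1-indexed). -/
def tauI (t : ℕ) (w : List ℤ) (r : ℕ) (ξ : Fin w.length → ZMod 2) :
    Fin w.length → ZMod 2 :=
  fun k => if (k : ℕ) + 1 = r then
    ξ k + ∑ j : Fin w.length,
      (if isEdge w ((j : ℕ) + 1) r then Om t w ((j : ℕ) + 1) r * ξ j else 0)
  else ξ k

/-- `r` is an `i`-bounded index: `r ∈ {1, …, d}` and `r⁻ > 0`. -/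
def Bdd (w : List ℤ) (r : ℕ) : Prop := 1 ≤ r ∧ r ≤ w.length ∧ 1 ≤ lminus w r

/-- The group `Γ_i`, generated by the transvections `τ_r` for all `i`-bounded `r`. -/
def GammaI (t : ℕ) (w : List ℤ) : Subgroup (Equiv.Perm (Fin w.length → ZMod 2)) :=
  Subgroup.closure {g | ∃ r, Bdd w r ∧ ⇑g = tauI t w r}

/-- The vertex `k` (1-indexed) belongs to `U`, i.e. `|i_k| ≤ t`. -/
def inU (t : ℕ) (w : List ℤ) (k : ℕ) : Prop := habs w k ≤ t

/-- The subgroup `Γ_U` of `Γ_i`, generated by the `τ_r` with `r ∈ B_U = B ∩ U`. -/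
def GammaU (t : ℕ) (w : List ℤ) : Subgroup (Equiv.Perm (Fin w.length → ZMod 2)) :=
  Subgroup.closure {g | ∃ r, Bdd w r ∧ inU t w r ∧ ⇑g = tauI t w r}

/-- The subgroup `Γ_L` of `Γ_i`, generated by the `τ_r` with `r ∈ B_L = B ∩ L`. -/
def GammaL (t : ℕ) (w : List ℤ) : Subgroup (Equiv.Perm (Fin w.length → ZMod 2)) :=
  Subgroup.closure {g | ∃ r, Bdd w r ∧ ¬ inU t w r ∧ ⇑g = tauI t w r}

/-- The coordinate subspace `𝔽₂^U ⊆ 𝔽₂^d` of vectors supported on `U`. -/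
def F2U (t : ℕ) (w : List ℤ) : Set (Fin w.length → ZMod 2) :=
  {ξ | ∀ k : Fin w.length, ¬ inU t w ((k : ℕ) + 1) → ξ k = 0}

/-- The coordinate subspace `𝔽₂^L ⊆ 𝔽₂^d` of vectors supported on `L`. -/
def F2L (t : ℕ) (w : List ℤ) : Set (Fin w.length → ZMod 2) :=
  {ξ | ∀ k : Fin w.length, inU t w ((k : ℕ) + 1) → ξ k = 0}

/-- `N_U`: the number of orbits of the (linear) `Γ_U(0)`-action on `𝔽₂^U` that are not
fixed points. -/
def NU (t : ℕ) (w : List ℤ) : ℕ :=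
  Nat.card {s : Set (Fin w.length → ZMod 2) |
    ∃ ξ ∈ F2U t w, s = MulAction.orbit (GammaU t w) ξ ∧ s ≠ {ξ}}

/-- `N_L`: the number of orbits of the `Γ_L`-action on `𝔽₂^L` that are not fixed points. -/
def NL (t : ℕ) (w : List ℤ) : ℕ :=
  Nat.card {s : Set (Fin w.length → ZMod 2) |
    ∃ ξ ∈ F2L t w, s = MulAction.orbit (GammaL t w) ξ ∧ s ≠ {ξ}}

section AuxFixed

/-- If `lminus w r ≥ 1`, then it is a genuine previous occurrence. -/
lemma lminus_mem {w : List ℤ} {r : ℕ} (h : 1 ≤ lminus w r) :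
    lminus w r < r ∧ habs w (lminus w r) = habs w r := by
  set s := (Finset.Ico 1 r).filter (fun k => habs w k = habs w r) with hs
  have hne : s.Nonempty := by
    by_contra hne
    rw [Finset.not_nonempty_iff_eq_empty] at hne
    have h0 : lminus w r = 0 := by rw [lminus, ← hs, hne]; simp
    omega
  obtain ⟨a, ha, hsup⟩ := Finset.exists_mem_eq_sup s hne id
  have hla : lminus w r = a := by rw [lminus, ← hs, hsup]; rfl
  simp only [hs, Finset.mem_filter, Finset.mem_Ico] at ha
  refine ⟨by omega, by rw [hla]; exact ha.2⟩

lemma lminus_lt {w : List ℤ} {r : ℕ} (hr : 1 ≤ r) : lminus w r < r := by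
  rcases Nat.lt_or_ge (lminus w r) 1 with h | h
  · omega
  · exact (lminus_mem h).1

lemma lminus_ge {w : List ℤ} {r k : ℕ} (h1 : 1 ≤ k) (h2 : k < r)
    (h3 : habs w k = habs w r) : k ≤ lminus w r := by
  have : k ∈ (Finset.Ico 1 r).filter (fun k => habs w k = habs w r) := by
    simp only [Finset.mem_filter, Finset.mem_Ico]
    exact ⟨⟨h1, h2⟩, h3⟩
  exact Finset.le_sup (f := id) this

/-- Uniqueness: a bounded index is determined by its `lminus`. -/
lemma desig_unique {w : List ℤ} {r r' : ℕ} (h : Bdd w r) (h' : Bdd w r')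
    (he : lminus w r = lminus w r') : r = r' := by
  rcases lt_trichotomy r r' with hlt | heq | hlt
  · exfalso
    have e1 := (lminus_mem h.2.2).2
    have e2 := (lminus_mem h'.2.2).2
    have : r ≤ lminus w r' := lminus_ge h.1 hlt (by rw [← e1, he, e2])
    have := lminus_lt (w := w) h.1
    omega
  · exact heq
  · exfalso
    have e1 := (lminus_mem h.2.2).2
    have e2 := (lminus_mem h'.2.2).2
    have : r' ≤ lminus w r := lminus_ge h'.1 hlt (by rw [← e2, ← he, e1])
    have := lminus_lt (w := w) h'.1
    omega

/-- For any edge `{a, b}` with `a < b`, we have `lminus w b ≤ a`. -/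
lemma lminus_le_of_edge {w : List ℤ} {a b : ℕ} (hab : a < b) (h : isEdge w a b) :
    lminus w b ≤ a := by
  rcases h with h | h
  · obtain ⟨_, _, _, hc⟩ := h
    rcases hc with h1 | ⟨_, h1, _⟩ | ⟨h1, h2, _⟩ <;> omega
  · exact absurd h.2.1 (by omega)

/-- A 1-based position `P` is "designated" if it is `lminus w r` for some bounded `r ∈ U`. -/
def Desig (t : ℕ) (w : List ℤ) (P : ℕ) : Prop :=
  ∃ r, Bdd w r ∧ inU t w r ∧ lminus w r = P

/-- A designated position adjacent to `r` other than `lminus w r` lies strictly above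
`lminus w r`. -/
lemma desig_gt {t : ℕ} {w : List ℤ} {r c : ℕ} (hr : Bdd w r)
    (hc : Desig t w c) (he : isEdge w c r) (hne : c ≠ lminus w r) :
    lminus w r < c := by
  obtain ⟨r'', h1, _, h3⟩ := hc
  have hc1 : 1 ≤ c := by
    have := h1.2.2; omega
  have hrlt : lminus w r < r := lminus_lt hr.1
  rcases lt_trichotomy c r with h | h | h
  · have := lminus_le_of_edge h he
    omega
  · omega
  · omega

/-- The value forced at the designated position `P = lminus w r` by the equation of `r`. -/
noncomputable def stepVal (t : ℕ) (w : List ℤ) (ζ : Fin w.length → ZMod 2)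
    (r P : ℕ) : ZMod 2 :=
  ∑ j : Fin w.length,
    (if isEdge w ((j : ℕ) + 1) r ∧ (j : ℕ) + 1 ≠ P then Om t w ((j : ℕ) + 1) r * ζ j else 0)

/-- Iterative construction of the fixed vector, fixing designated positions from the top down. -/
noncomputable def gseq (t : ℕ) (w : List ℤ) (ν : Fin w.length → ZMod 2) :
    ℕ → (Fin w.length → ZMod 2)
  | 0 => fun p => if inU t w ((p : ℕ) + 1) then 0 else ν p
  | (m + 1) =>
    if h : Desig t w (w.length - m) then
      fun p => if (p : ℕ) + 1 = w.length - m
        then stepVal t w (gseq t w ν m) h.choose (w.length - m)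
        else gseq t w ν m p
    else gseq t w ν m

lemma gseq_stable (t : ℕ) (w : List ℤ) (ν : Fin w.length → ZMod 2) {m m' : ℕ}
    (h : m ≤ m') (p : Fin w.length) (hp : w.length - m < (p : ℕ) + 1) :
    gseq t w ν m' p = gseq t w ν m p := by
  induction m' with
  | zero => rw [Nat.le_zero.mp h]
  | succ m' ih =>
    rcases Nat.lt_or_ge m (m' + 1) with hm | hm
    · have hm' : m ≤ m' := by omega
      have step : gseq t w ν (m' + 1) p = gseq t w ν m' p := by
        by_cases hd : Desig t w (w.length - m')
        · simp only [gseq, dif_pos hd]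
          rw [if_neg (by omega)]
        · simp only [gseq, dif_neg hd]
      rw [step, ih hm']
    · have : m = m' + 1 := by omega
      rw [this]

lemma gseq_base (t : ℕ) (w : List ℤ) (ν : Fin w.length → ZMod 2) (m : ℕ)
    (p : Fin w.length) (hp : ¬ Desig t w ((p : ℕ) + 1)) :
    gseq t w ν m p = gseq t w ν 0 p := by
  induction m with
  | zero => rfl
  | succ m ih =>
    by_cases hd : Desig t w (w.length - m)
    · simp only [gseq, dif_pos hd]
      rw [if_neg (fun hcontra => hp (by rw [hcontra]; exact hd))]
      exact ih
    · simp only [gseq, dif_neg hd]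
      exact ih

lemma zmod2_add_self (x : ZMod 2) : x + x = 0 := by revert x; decide

end AuxFixed

/-- The affine `Γ_U(ν)`-action on `𝔽₂^U` has at least one fixed point. (Under the shift
by `ν`, a fixed point of the `Γ_U(ν)`-action corresponds to a vector `ζ ∈ ν + 𝔽₂^U` fixed
by every generator `τ_r`, `r ∈ B_U`, of `Γ_U`.) -/
theorem GammaU_nu_action_has_fixed_point (n t : ℕ) (hn : 2 ≤ n) (ht : 1 ≤ t)
    (ht' : t ≤ n - 1) (u v : Wgrp n t) (w : List ℤ) (hw : IsRedPair n t u v w)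
    (ν : Fin w.length → ZMod 2) (hν : ν ∈ F2L t w) :
    ∃ ζ : Fin w.length → ZMod 2,
      (∀ k : Fin w.length, ¬ inU t w ((k : ℕ) + 1) → ζ k = ν k) ∧
      ∀ r, Bdd w r → inU t w r → tauI t w r ζ = ζ := by
  classical
  set ζ := gseq t w ν w.length with hζ
  have hDesigU : ∀ P, Desig t w P → inU t w P := by
    rintro P ⟨r, hr, hrU, hl⟩
    have := (lminus_mem hr.2.2).2
    rw [hl] at this
    unfold inU at *
    rw [this]; exact hrU
  refine ⟨ζ, ?_, ?_⟩
  · intro k hk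
    have hnd : ¬ Desig t w ((k : ℕ) + 1) := fun h => hk (hDesigU _ h)
    rw [hζ, gseq_base t w ν w.length k hnd]
    simp only [gseq, if_neg hk]
  · intro r hB hU
    set P := lminus w r with hP
    have hP1 : 1 ≤ P := hB.2.2
    have hPr : P < r := lminus_lt hB.1
    have hrd : r ≤ w.length := hB.2.1
    set m := w.length - P with hm
    have hdm : w.length - m = P := by omega
    have hDes : Desig t w (w.length - m) := ⟨r, hB, hU, by omega⟩
    set p₀ : Fin w.length := ⟨P - 1, by omega⟩ with hp₀
    have hp₀1 : (p₀ : ℕ) + 1 = P := by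
      show P - 1 + 1 = P
      omega
    -- the chosen index equals r
    have hch := hDes.choose_spec
    have hr₀ : hDes.choose = r :=
      desig_unique hch.1 hB (by rw [hch.2.2]; omega)
    -- value at step m+1
    have hstep : gseq t w ν (m + 1) p₀ = stepVal t w (gseq t w ν m) r P := by
      simp only [gseq, dif_pos hDes]
      rw [if_pos (by omega), hr₀, hdm]
    have hfin : ζ p₀ = gseq t w ν (m + 1) p₀ := by
      rw [hζ]
      exact gseq_stable t w ν (by omega) p₀ (by omega)
    have hsv : stepVal t w (gseq t w ν m) r P = stepVal t w ζ r P := by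
      unfold stepVal
      refine Finset.sum_congr rfl (fun j _ => ?_)
      by_cases hj : isEdge w ((j : ℕ) + 1) r ∧ (j : ℕ) + 1 ≠ P
      · rw [if_pos hj, if_pos hj]
        congr 1
        by_cases hDj : Desig t w ((j : ℕ) + 1)
        · have hgt : P < (j : ℕ) + 1 := desig_gt hB hDj hj.1 hj.2
          rw [hζ]
          exact (gseq_stable t w ν (show m ≤ w.length by omega) j (by omega)).symm
        · rw [gseq_base t w ν m j hDj, hζ, gseq_base t w ν w.length j hDj]
      · rw [if_neg hj, if_neg hj]
    have hζP : ζ p₀ = stepVal t w ζ r P := by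
      rw [hfin, hstep, hsv]
    have hE : isEdge w P r := Or.inl ⟨hP1, hPr, hrd, Or.inl rfl⟩
    have hOm : Om t w P r = 1 := by
      rw [Om, if_pos (lminus_mem hP1).2]
    -- conclude
    funext k
    simp only [tauI]
    by_cases hk : (k : ℕ) + 1 = r
    · rw [if_pos hk]
      have hsplit : ∀ j : Fin w.length,
          (if isEdge w ((j : ℕ) + 1) r then Om t w ((j : ℕ) + 1) r * ζ j else 0) =
          (if j = p₀ then Om t w P r * ζ j else 0) +
          (if isEdge w ((j : ℕ) + 1) r ∧ (j : ℕ) + 1 ≠ P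
            then Om t w ((j : ℕ) + 1) r * ζ j else 0) := by
        intro j
        by_cases hjp : j = p₀
        · subst hjp
          rw [hp₀1, if_pos rfl, if_pos hE, if_neg (by simp), add_zero]
        · have hne : (j : ℕ) + 1 ≠ P := by
            intro hcontra
            exact hjp (Fin.ext (by omega))
          rw [if_neg hjp, zero_add]
          by_cases hEj : isEdge w ((j : ℕ) + 1) r
          · rw [if_pos hEj, if_pos ⟨hEj, hne⟩]
          · rw [if_neg hEj, if_neg (fun h => hEj h.1)]
      rw [Finset.sum_congr rfl (fun j _ => hsplit j), Finset.sum_add_distrib]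
      rw [Finset.sum_ite_eq' Finset.univ p₀ (fun j => Om t w P r * ζ j),
        if_pos (Finset.mem_univ p₀), hOm, one_mul]
      show ζ k + (ζ p₀ + stepVal t w ζ r P) = ζ k
      rw [← hζP, zmod2_add_self, add_zero]
    · rw [if_neg hk]
end
end
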